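/- arXiv:math/9703215 — 5 statements merged into one kernel-verified Lean document; each statement's English description precedes it below -/
import Mathlib

section
/- Fix q with 0 < q < 1 and let ν > −1 be real. Then every zero of J_ν(·;q²) is real; equivalently, every complex zero of the entire function x ↦ x^{−ν} J_ν(x;q²) is real. -/
open scoped BigOperators

noncomputable section

/-- Finite q-shifted factorial `(a;q)_k` in `ℂ`. -/
def qPochC (a q : ℂ) (k : ℕ) : ℂ := ∏ j ∈ Finset.range k, (1 - a * q ^ j)

/-- Infinite q-shifted factorial `(a;q)_∞` in `ℂ`. -/
def qPochInfC (a q : ℂ) : ℂ := ∏' j : ℕ, (1 - a * q ^ j)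

namespace Cor32
open Filter Topology

def P (a Q : ℝ) (k : ℕ) : ℝ := ∏ j ∈ Finset.range k, (1 - a * Q ^ j)

def cR (Q r : ℝ) (k : ℕ) : ℝ :=
  ((-1 : ℝ) ^ k * Q ^ (k * (k + 1) / 2)) / (P Q Q k * P r Q k)

def FF (Q r : ℝ) (z : ℂ) : ℂ := ∑' k : ℕ, (cR Q r k : ℂ) * z ^ k

lemma factor_lb {Q a : ℝ} (hQ0 : 0 < Q) (hQ1 : Q < 1) (ha0 : 0 ≤ a) (ha1 : a < 1) (j : ℕ) :
    1 - a ≤ 1 - a * Q ^ j := by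
  have h1 : 0 < Q ^ j := pow_pos hQ0 j
  have h2 : Q ^ j ≤ 1 := pow_le_one₀ hQ0.le hQ1.le
  nlinarith

lemma P_pos {Q a : ℝ} (hQ0 : 0 < Q) (hQ1 : Q < 1) (ha0 : 0 ≤ a) (ha1 : a < 1) (k : ℕ) :
    0 < P a Q k := by
  apply Finset.prod_pos
  intro j _
  have := factor_lb hQ0 hQ1 ha0 ha1 j
  linarith

lemma cR_succ {Q r : ℝ} (hQ0 : 0 < Q) (hQ1 : Q < 1) (hr0 : 0 ≤ r) (hr1 : r < 1) (k : ℕ) :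
    cR Q r (k + 1) * ((1 - Q ^ (k + 1)) * (1 - r * Q ^ k)) = -(Q ^ (k + 1)) * cR Q r k := by
  have he : (k + 1) * (k + 1 + 1) / 2 = k * (k + 1) / 2 + (k + 1) := by
    rw [show (k + 1) * (k + 1 + 1) = k * (k + 1) + 2 * (k + 1) by ring,
      Nat.add_mul_div_left _ _ (by norm_num : (0:ℕ) < 2)]
  have hP1 : P Q Q (k + 1) = P Q Q k * (1 - Q * Q ^ k) := Finset.prod_range_succ _ _
  have hP2 : P r Q (k + 1) = P r Q k * (1 - r * Q ^ k) := Finset.prod_range_succ _ _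
  have hp1 : P Q Q k ≠ 0 := (P_pos hQ0 hQ1 hQ0.le hQ1 k).ne'
  have hp2 : P r Q k ≠ 0 := (P_pos hQ0 hQ1 hr0 hr1 k).ne'
  have hf1 : (1 - Q * Q ^ k) ≠ 0 := by
    have := factor_lb hQ0 hQ1 hQ0.le hQ1 k; intro h; nlinarith
  have hf2 : (1 - r * Q ^ k) ≠ 0 := by
    have := factor_lb hQ0 hQ1 hr0 hr1 k; intro h; nlinarith
  rw [cR, cR, he, pow_add, hP1, hP2]
  have hf2' : (1 - Q ^ k * r) ≠ 0 := by rwa [mul_comm]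
  field_simp
  ring

lemma abs_cR {Q r : ℝ} (hQ0 : 0 < Q) (hQ1 : Q < 1) (hr0 : 0 ≤ r) (hr1 : r < 1) (k : ℕ) :
    |cR Q r k| = Q ^ (k * (k + 1) / 2) / (P Q Q k * P r Q k) := by
  rw [cR, abs_div, abs_mul, abs_mul, abs_pow, abs_pow, abs_neg, abs_one, one_pow, one_mul,
    abs_of_pos hQ0, abs_of_pos (P_pos hQ0 hQ1 hQ0.le hQ1 k), abs_of_pos (P_pos hQ0 hQ1 hr0 hr1 k)]

lemma abs_cR_succ {Q r : ℝ} (hQ0 : 0 < Q) (hQ1 : Q < 1) (hr0 : 0 ≤ r) (hr1 : r < 1) (k : ℕ) :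
    |cR Q r (k + 1)| ≤ Q ^ (k + 1) / ((1 - Q) * (1 - r)) * |cR Q r k| := by
  have hrec := cR_succ hQ0 hQ1 hr0 hr1 k
  have hb1 := factor_lb hQ0 hQ1 hQ0.le hQ1 k
  have hb2 := factor_lb hQ0 hQ1 hr0 hr1 k
  have hQk : 0 < Q ^ k := pow_pos hQ0 k
  have hQk1 : Q ^ (k + 1) = Q * Q ^ k := pow_succ' Q k
  have hf1 : 0 < 1 - Q ^ (k + 1) := by rw [hQk1]; nlinarith
  have hf2 : 0 < 1 - r * Q ^ k := by nlinarith
  have habs : |cR Q r (k + 1)| * ((1 - Q ^ (k + 1)) * (1 - r * Q ^ k))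
      = Q ^ (k + 1) * |cR Q r k| := by
    have h := congrArg abs hrec
    rw [abs_mul, abs_mul, abs_of_pos hf1, abs_of_pos hf2, abs_mul, abs_neg, abs_pow,
      abs_of_pos hQ0] at h
    exact h
  have hD : 0 < (1 - Q) * (1 - r) := by nlinarith
  have hDle : (1 - Q) * (1 - r) ≤ (1 - Q ^ (k + 1)) * (1 - r * Q ^ k) := by
    rw [hQk1]; nlinarith
  rw [div_mul_eq_mul_div, le_div_iff₀ hD]
  calc |cR Q r (k + 1)| * ((1 - Q) * (1 - r))
      ≤ |cR Q r (k + 1)| * ((1 - Q ^ (k + 1)) * (1 - r * Q ^ k)) :=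
        mul_le_mul_of_nonneg_left hDle (abs_nonneg _)
    _ = Q ^ (k + 1) * |cR Q r k| := habs

lemma summable_core {Q r : ℝ} (hQ0 : 0 < Q) (hQ1 : Q < 1) (hr0 : 0 ≤ r) (hr1 : r < 1)
    (j : ℕ) {b : ℝ} (hb : 0 ≤ b) :
    Summable (fun k : ℕ => |cR Q r (k + j)| * b ^ k) := by
  have hD : 0 < (1 - Q) * (1 - r) := by nlinarith
  apply summable_of_ratio_norm_eventually_le (r := 1/2) (by norm_num)
  have htend : Tendsto (fun k : ℕ => Q ^ (k + 1) / ((1 - Q) * (1 - r)) * b) atTop (𝓝 0) := by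
    have h0 := tendsto_pow_atTop_nhds_zero_of_lt_one hQ0.le hQ1
    have h1 := ((h0.comp (tendsto_add_atTop_nat 1)).div_const ((1 - Q) * (1 - r))).mul_const b
    simpa using h1
  have hev : ∀ᶠ k : ℕ in atTop, Q ^ (k + 1) / ((1 - Q) * (1 - r)) * b ≤ 1/2 :=
    htend.eventually (eventually_le_nhds (by norm_num))
  filter_upwards [hev] with k hk
  rw [Real.norm_eq_abs, Real.norm_eq_abs,
    abs_of_nonneg (show (0:ℝ) ≤ |cR Q r (k + 1 + j)| * b ^ (k + 1) by positivity),
    abs_of_nonneg (show (0:ℝ) ≤ |cR Q r (k + j)| * b ^ k by positivity),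
    show k + 1 + j = k + j + 1 from by omega]
  have h1 : |cR Q r (k + j + 1)| ≤ Q ^ (k + j + 1) / ((1 - Q) * (1 - r)) * |cR Q r (k + j)| :=
    abs_cR_succ hQ0 hQ1 hr0 hr1 (k + j)
  have h2 : Q ^ (k + j + 1) ≤ Q ^ (k + 1) :=
    pow_le_pow_of_le_one hQ0.le hQ1.le (by omega)
  calc |cR Q r (k + j + 1)| * b ^ (k + 1)
      ≤ (Q ^ (k + j + 1) / ((1 - Q) * (1 - r)) * |cR Q r (k + j)|) * (b ^ k * b) := by
        rw [pow_succ]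
        exact mul_le_mul h1 le_rfl (by positivity) (by positivity)
    _ = (Q ^ (k + j + 1) / ((1 - Q) * (1 - r)) * b) * (|cR Q r (k + j)| * b ^ k) := by ring
    _ ≤ (Q ^ (k + 1) / ((1 - Q) * (1 - r)) * b) * (|cR Q r (k + j)| * b ^ k) := by
        gcongr
    _ ≤ 1/2 * (|cR Q r (k + j)| * b ^ k) :=
        mul_le_mul_of_nonneg_right hk (by positivity)

section FF

variable {Q r : ℝ}

lemma summable_c (hQ0 : 0 < Q) (hQ1 : Q < 1) (hr0 : 0 ≤ r) (hr1 : r < 1) (z : ℂ) :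
    Summable (fun k : ℕ => (cR Q r k : ℂ) * z ^ k) := by
  apply Summable.of_norm
  have h := summable_core hQ0 hQ1 hr0 hr1 0 (norm_nonneg z)
  apply h.congr
  intro k
  simp [norm_mul, norm_pow, Complex.norm_real, Real.norm_eq_abs]

lemma cR_zero : cR Q r 0 = 1 := by simp [cR, P]

lemma FF_sub_one {z : ℂ} (hQ0 : 0 < Q) (hQ1 : Q < 1) (hr0 : 0 ≤ r) (hr1 : r < 1) :
    FF Q r z - 1 = ∑' k : ℕ, (cR Q r (k + 1) : ℂ) * z ^ (k + 1) := by
  rw [FF, Summable.tsum_eq_zero_add (summable_c hQ0 hQ1 hr0 hr1 z)]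
  simp [cR_zero]

lemma FF_bound (hQ0 : 0 < Q) (hQ1 : Q < 1) (hr0 : 0 ≤ r) (hr1 : r < 1)
    {B : ℝ} {w : ℂ} (hw : ‖w‖ ≤ B) :
    ‖FF Q r w - 1‖ ≤ (∑' k : ℕ, |cR Q r (k + 1)| * B ^ k) * ‖w‖ := by
  have hB : 0 ≤ B := le_trans (norm_nonneg w) hw
  rw [FF_sub_one hQ0 hQ1 hr0 hr1]
  have hs1 : Summable (fun k : ℕ => |cR Q r (k + 1)| * B ^ k) :=
    summable_core hQ0 hQ1 hr0 hr1 1 hB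
  have hs2 : Summable (fun k : ℕ => ‖(cR Q r (k + 1) : ℂ) * w ^ (k + 1)‖) := by
    apply Summable.of_nonneg_of_le (fun k => norm_nonneg _) _ (hs1.mul_right ‖w‖)
    intro k
    rw [norm_mul, norm_pow, Complex.norm_real, Real.norm_eq_abs, pow_succ]
    calc |cR Q r (k + 1)| * (‖w‖ ^ k * ‖w‖)
        ≤ |cR Q r (k + 1)| * (B ^ k * ‖w‖) := by
          have := pow_le_pow_left₀ (norm_nonneg w) hw k
          gcongr
      _ = |cR Q r (k + 1)| * B ^ k * ‖w‖ := by ring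
  calc ‖∑' k : ℕ, (cR Q r (k + 1) : ℂ) * w ^ (k + 1)‖
      ≤ ∑' k : ℕ, ‖(cR Q r (k + 1) : ℂ) * w ^ (k + 1)‖ := norm_tsum_le_tsum_norm hs2
    _ ≤ ∑' k : ℕ, |cR Q r (k + 1)| * B ^ k * ‖w‖ := by
        apply Summable.tsum_le_tsum _ hs2 (hs1.mul_right ‖w‖)
        intro k
        rw [norm_mul, norm_pow, Complex.norm_real, Real.norm_eq_abs, pow_succ]
        calc |cR Q r (k + 1)| * (‖w‖ ^ k * ‖w‖)
            ≤ |cR Q r (k + 1)| * (B ^ k * ‖w‖) := by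
              have := pow_le_pow_left₀ (norm_nonneg w) hw k
              gcongr
          _ = |cR Q r (k + 1)| * B ^ k * ‖w‖ := by ring
    _ = (∑' k : ℕ, |cR Q r (k + 1)| * B ^ k) * ‖w‖ := by
        rw [tsum_mul_right]

lemma FF_conj (z : ℂ) : FF Q r ((starRingEnd ℂ) z) = (starRingEnd ℂ) (FF Q r z) := by
  rw [FF, FF]
  rw [show ((starRingEnd ℂ) (∑' k : ℕ, (cR Q r k : ℂ) * z ^ k))
      = star (∑' k : ℕ, (cR Q r k : ℂ) * z ^ k) from rfl, tsum_star]
  apply tsum_congr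
  intro k
  rw [star_mul', star_pow]
  simp [Complex.star_def, Complex.conj_ofReal]

lemma funceq (hQ0 : 0 < Q) (hQ1 : Q < 1) (hr0 : 0 ≤ r) (hr1 : r < 1) (z : ℂ) :
    FF Q r z = (1 + (r : ℂ) / (Q : ℂ) - (Q : ℂ) * z) * FF Q r ((Q : ℂ) * z)
      - ((r : ℂ) / (Q : ℂ)) * FF Q r ((Q : ℂ) ^ 2 * z) := by
  have hQC : (Q : ℂ) ≠ 0 := by
    simp only [ne_eq, Complex.ofReal_eq_zero]; exact hQ0.ne'
  set S : ℂ := (r : ℂ) / (Q : ℂ) with hS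
  have hSQ : S * (Q : ℂ) = (r : ℂ) := div_mul_cancel₀ _ hQC
  have h1 := summable_c hQ0 hQ1 hr0 hr1 z
  have h2 := summable_c hQ0 hQ1 hr0 hr1 ((Q : ℂ) * z)
  have h3 := summable_c hQ0 hQ1 hr0 hr1 ((Q : ℂ) ^ 2 * z)
  set g : ℕ → ℂ := fun k =>
    (cR Q r k : ℂ) * z ^ k * ((1 - (Q : ℂ) ^ k) * (1 - S * (Q : ℂ) ^ k)) with hg
  have hge : ∀ k, g k = (cR Q r k : ℂ) * z ^ k
      - (1 + S) * ((cR Q r k : ℂ) * ((Q : ℂ) * z) ^ k)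
      + S * ((cR Q r k : ℂ) * ((Q : ℂ) ^ 2 * z) ^ k) := by
    intro k
    simp only [hg, mul_pow]
    ring
  have hgsum : Summable g := by
    apply Summable.congr ((h1.sub (h2.mul_left (1 + S))).add (h3.mul_left S))
    intro k
    rw [hge k]
  have key1 : ∑' k, g k = FF Q r z - (1 + S) * FF Q r ((Q : ℂ) * z)
      + S * FF Q r ((Q : ℂ) ^ 2 * z) := by
    rw [tsum_congr hge, Summable.tsum_add (h1.sub (h2.mul_left (1 + S))) (h3.mul_left S),
      Summable.tsum_sub h1 (h2.mul_left (1 + S)), tsum_mul_left, tsum_mul_left]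
    rfl
  have key2 : ∑' k, g k = -((Q : ℂ) * z) * FF Q r ((Q : ℂ) * z) := by
    rw [Summable.tsum_eq_zero_add hgsum]
    have hg0 : g 0 = 0 := by simp [hg]
    have hgs : ∀ k : ℕ, g (k + 1) = -((Q : ℂ) * z) * ((cR Q r k : ℂ) * ((Q : ℂ) * z) ^ k) := by
      intro k
      have hrecR := cR_succ hQ0 hQ1 hr0 hr1 k
      have hrec : (cR Q r (k + 1) : ℂ) * ((1 - (Q : ℂ) ^ (k + 1)) * (1 - (r : ℂ) * (Q : ℂ) ^ k))
          = -((Q : ℂ) ^ (k + 1)) * (cR Q r k : ℂ) := by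
        exact_mod_cast congrArg (fun t : ℝ => (t : ℂ)) hrecR
      have hSQ' : S * (Q : ℂ) ^ (k + 1) = (r : ℂ) * (Q : ℂ) ^ k := by
        rw [pow_succ]
        calc S * ((Q : ℂ) ^ k * (Q : ℂ)) = (S * (Q : ℂ)) * (Q : ℂ) ^ k := by ring
          _ = (r : ℂ) * (Q : ℂ) ^ k := by rw [hSQ]
      calc g (k + 1)
          = (cR Q r (k + 1) : ℂ) * ((1 - (Q : ℂ) ^ (k + 1)) * (1 - S * (Q : ℂ) ^ (k + 1)))
            * z ^ (k + 1) := by simp only [hg]; ring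
        _ = (cR Q r (k + 1) : ℂ) * ((1 - (Q : ℂ) ^ (k + 1)) * (1 - (r : ℂ) * (Q : ℂ) ^ k))
            * z ^ (k + 1) := by rw [hSQ']
        _ = -((Q : ℂ) ^ (k + 1)) * (cR Q r k : ℂ) * z ^ (k + 1) := by
            linear_combination z ^ (k + 1) * hrec
        _ = -((Q : ℂ) * z) * ((cR Q r k : ℂ) * ((Q : ℂ) * z) ^ k) := by
            rw [mul_pow]; ring
    rw [hg0, zero_add, tsum_congr hgs, tsum_mul_left]
    rfl
  have hk := key1.symm.trans key2
  linear_combination hk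

theorem FF_zero_im {Q r : ℝ} (hQ0 : 0 < Q) (hQ1 : Q < 1) (hr0 : 0 < r) (hr1 : r < 1)
    {z0 : ℂ} (h : FF Q r z0 = 0) : z0.im = 0 := by
  by_contra him
  have hQC : (Q : ℂ) ≠ 0 := by
    simp only [ne_eq, Complex.ofReal_eq_zero]; exact hQ0.ne'
  have hsR0 : 0 < r / Q := div_pos hr0 hQ0
  set S : ℂ := (r : ℂ) / (Q : ℂ) with hS
  have hSre : S = ((r / Q : ℝ) : ℂ) := by push_cast; rfl
  have hSQ : S * (Q : ℂ) = (r : ℂ) := div_mul_cancel₀ _ hQC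
  set u : ℕ → ℂ := fun m => FF Q r ((Q : ℂ) ^ m * z0) with hu
  set v : ℕ → ℂ := fun m => FF Q r ((Q : ℂ) ^ m * (starRingEnd ℂ) z0) with hv
  have hvu : ∀ m, v m = (starRingEnd ℂ) (u m) := by
    intro m
    simp only [hv, hu]
    have e : (Q : ℂ) ^ m * (starRingEnd ℂ) z0 = (starRingEnd ℂ) ((Q : ℂ) ^ m * z0) := by
      rw [map_mul, ← Complex.ofReal_pow, Complex.conj_ofReal]
    rw [e, FF_conj]
  have hurec : ∀ m, u m = (1 + S - (Q : ℂ) ^ (m + 1) * z0) * u (m + 1) - S * u (m + 2) := by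
    intro m
    have h := funceq hQ0 hQ1 hr0.le hr1 ((Q : ℂ) ^ m * z0)
    rw [show (Q : ℂ) * ((Q : ℂ) ^ m * z0) = (Q : ℂ) ^ (m + 1) * z0 by ring,
      show (Q : ℂ) ^ 2 * ((Q : ℂ) ^ m * z0) = (Q : ℂ) ^ (m + 2) * z0 by ring] at h
    exact h
  have hvrec : ∀ m, v m = (1 + S - (Q : ℂ) ^ (m + 1) * (starRingEnd ℂ) z0) * v (m + 1)
      - S * v (m + 2) := by
    intro m
    have h := funceq hQ0 hQ1 hr0.le hr1 ((Q : ℂ) ^ m * (starRingEnd ℂ) z0)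
    rw [show (Q : ℂ) * ((Q : ℂ) ^ m * (starRingEnd ℂ) z0)
        = (Q : ℂ) ^ (m + 1) * (starRingEnd ℂ) z0 by ring,
      show (Q : ℂ) ^ 2 * ((Q : ℂ) ^ m * (starRingEnd ℂ) z0)
        = (Q : ℂ) ^ (m + 2) * (starRingEnd ℂ) z0 by ring] at h
    exact h
  set W : ℕ → ℂ := fun m => u m * v (m + 1) - v m * u (m + 1) with hW
  have key : ∀ m, S ^ m * W m - S ^ (m + 1) * W (m + 1)
      = -(S ^ m * (Q : ℂ) ^ (m + 1)) * (z0 - (starRingEnd ℂ) z0) * (u (m + 1) * v (m + 1)) := by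
    intro m
    simp only [hW]
    rw [hurec m, hvrec m]
    ring
  have hterm : ∀ m, -(S ^ m * (Q : ℂ) ^ (m + 1)) * (z0 - (starRingEnd ℂ) z0)
      * (u (m + 1) * v (m + 1))
      = -((z0 - (starRingEnd ℂ) z0) * (Q : ℂ)
          * ((r ^ m * Complex.normSq (u (m + 1)) : ℝ) : ℂ)) := by
    intro m
    rw [hvu (m + 1), Complex.mul_conj]
    have e : S ^ m * (Q : ℂ) ^ (m + 1) = (Q : ℂ) * ((r : ℂ)) ^ m := by
      rw [pow_succ]
      calc S ^ m * ((Q : ℂ) ^ m * (Q : ℂ)) = (S * (Q : ℂ)) ^ m * (Q : ℂ) := by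
            rw [mul_pow]; ring
        _ = (r : ℂ) ^ m * (Q : ℂ) := by rw [hSQ]
        _ = (Q : ℂ) * (r : ℂ) ^ m := mul_comm _ _
    push_cast
    linear_combination (-(z0 - (starRingEnd ℂ) z0) * ((Complex.normSq (u (m + 1)) : ℝ) : ℂ)) * e
  have hu0 : u 0 = 0 := by simp only [hu, pow_zero, one_mul]; exact h
  have hv0 : v 0 = 0 := by rw [hvu 0, hu0, map_zero]
  have hW0 : W 0 = 0 := by simp only [hW, hu0, hv0]; ring
  have hsum : ∀ N : ℕ, (z0 - (starRingEnd ℂ) z0) * (Q : ℂ)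
      * (((∑ m ∈ Finset.range N, r ^ m * Complex.normSq (u (m + 1))) : ℝ) : ℂ)
      = S ^ N * W N := by
    intro N
    have t := Finset.sum_range_sub' (fun m => S ^ m * W m) N
    rw [Finset.sum_congr rfl (fun m _ => (key m).trans (hterm m))] at t
    rw [pow_zero, one_mul, hW0] at t
    rw [Finset.sum_neg_distrib, ← Finset.mul_sum] at t
    rw [Complex.ofReal_sum]
    linear_combination -t
  -- quantitative bounds
  have hz0 : z0 ≠ 0 := fun hz => him (by rw [hz]; rfl)
  set B : ℝ := ‖z0‖ with hB
  have hB0 : 0 < B := norm_pos_iff.mpr hz0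
  set K : ℝ := ∑' k : ℕ, |cR Q r (k + 1)| * B ^ k with hK
  have hK0 : 0 ≤ K := tsum_nonneg (fun k => by positivity)
  have hnormQ : ‖(Q : ℂ)‖ = Q := by
    rw [Complex.norm_real, Real.norm_eq_abs, abs_of_pos hQ0]
  have hwB : ∀ m : ℕ, ‖(Q : ℂ) ^ m * z0‖ = Q ^ m * B := by
    intro m
    rw [norm_mul, norm_pow, hnormQ, hB]
  have hue : ∀ m, ‖u m - 1‖ ≤ K * B * Q ^ m := by
    intro m
    have hle : ‖(Q : ℂ) ^ m * z0‖ ≤ B := by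
      rw [hwB m]
      nlinarith [pow_le_one₀ hQ0.le hQ1.le (n := m), pow_pos hQ0 m]
    have h2 := FF_bound hQ0 hQ1 hr0.le hr1 hle
    rw [hwB m] at h2
    calc ‖u m - 1‖ ≤ K * (Q ^ m * B) := h2
      _ = K * B * Q ^ m := by ring
  have hve : ∀ m, ‖v m - 1‖ ≤ K * B * Q ^ m := by
    intro m
    rw [hvu m, show (1 : ℂ) = (starRingEnd ℂ) 1 by simp, ← map_sub, RCLike.norm_conj]
    exact hue m
  set C : ℝ := 2 * (K * B) * (K * B) + 4 * (K * B) with hC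
  have hWb : ∀ m, ‖W m‖ ≤ C * Q ^ m := by
    intro m
    have hQm : 0 < Q ^ m := pow_pos hQ0 m
    have hQm1 : Q ^ (m + 1) ≤ Q ^ m := pow_le_pow_of_le_one hQ0.le hQ1.le (by omega)
    have hQle : Q ^ m ≤ 1 := pow_le_one₀ hQ0.le hQ1.le
    have e1 := hue m
    have e3 := hve m
    have hKB : 0 ≤ K * B := mul_nonneg hK0 hB0.le
    have hmono : K * B * Q ^ (m + 1) ≤ K * B * Q ^ m := by nlinarith
    have e2 : ‖u (m + 1) - 1‖ ≤ K * B * Q ^ m := le_trans (hue (m + 1)) hmono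
    have e4 : ‖v (m + 1) - 1‖ ≤ K * B * Q ^ m := le_trans (hve (m + 1)) hmono
    have hident : W m = (u m - 1) * (v (m + 1) - 1) - (v m - 1) * (u (m + 1) - 1)
        + (u m - 1) + (v (m + 1) - 1) - (v m - 1) - (u (m + 1) - 1) := by
      simp only [hW]; ring
    rw [hident]
    have n1 : ‖(u m - 1) * (v (m + 1) - 1)‖ ≤ (K * B * Q ^ m) * (K * B * Q ^ m) := by
      rw [norm_mul]
      exact mul_le_mul e1 e4 (norm_nonneg _) (by positivity)
    have n2 : ‖(v m - 1) * (u (m + 1) - 1)‖ ≤ (K * B * Q ^ m) * (K * B * Q ^ m) := by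
      rw [norm_mul]
      exact mul_le_mul e3 e2 (norm_nonneg _) (by positivity)
    have step : ‖(u m - 1) * (v (m + 1) - 1) - (v m - 1) * (u (m + 1) - 1)
        + (u m - 1) + (v (m + 1) - 1) - (v m - 1) - (u (m + 1) - 1)‖
        ≤ ‖(u m - 1) * (v (m + 1) - 1)‖ + ‖(v m - 1) * (u (m + 1) - 1)‖
          + ‖u m - 1‖ + ‖v (m + 1) - 1‖ + ‖v m - 1‖ + ‖u (m + 1) - 1‖ := by
      calc ‖(u m - 1) * (v (m + 1) - 1) - (v m - 1) * (u (m + 1) - 1)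
            + (u m - 1) + (v (m + 1) - 1) - (v m - 1) - (u (m + 1) - 1)‖
          ≤ ‖(u m - 1) * (v (m + 1) - 1) - (v m - 1) * (u (m + 1) - 1)
            + (u m - 1) + (v (m + 1) - 1) - (v m - 1)‖ + ‖u (m + 1) - 1‖ :=
            norm_sub_le _ _
        _ ≤ (‖(u m - 1) * (v (m + 1) - 1) - (v m - 1) * (u (m + 1) - 1)
            + (u m - 1) + (v (m + 1) - 1)‖ + ‖v m - 1‖) + ‖u (m + 1) - 1‖ := by
            gcongr
            exact norm_sub_le _ _
        _ ≤ ((‖(u m - 1) * (v (m + 1) - 1) - (v m - 1) * (u (m + 1) - 1)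
            + (u m - 1)‖ + ‖v (m + 1) - 1‖) + ‖v m - 1‖) + ‖u (m + 1) - 1‖ := by
            gcongr
            exact norm_add_le _ _
        _ ≤ (((‖(u m - 1) * (v (m + 1) - 1) - (v m - 1) * (u (m + 1) - 1)‖
            + ‖u m - 1‖) + ‖v (m + 1) - 1‖) + ‖v m - 1‖) + ‖u (m + 1) - 1‖ := by
            gcongr
            exact norm_add_le _ _
        _ ≤ ((((‖(u m - 1) * (v (m + 1) - 1)‖ + ‖(v m - 1) * (u (m + 1) - 1)‖)
            + ‖u m - 1‖) + ‖v (m + 1) - 1‖) + ‖v m - 1‖) + ‖u (m + 1) - 1‖ := by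
            gcongr
            exact norm_sub_le _ _
        _ = _ := by ring
    refine le_trans step ?_
    have hsq : (K * B * Q ^ m) * (K * B * Q ^ m) ≤ (K * B) * (K * B) * Q ^ m := by
      nlinarith [mul_nonneg hK0 hB0.le]
    nlinarith [mul_nonneg hK0 hB0.le]
  -- norm of z0 - conj z0
  have hIm : ‖z0 - (starRingEnd ℂ) z0‖ = 2 * |z0.im| := by
    rw [Complex.sub_conj]
    rw [norm_mul, Complex.norm_I, mul_one, Complex.norm_real, Real.norm_eq_abs, abs_mul]
    norm_num
  have hImpos : 0 < 2 * |z0.im| := by positivity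
  set C2 : ℝ := C / (2 * |z0.im| * Q) with hC2
  have hSb : ∀ N : ℕ, (∑ m ∈ Finset.range N, r ^ m * Complex.normSq (u (m + 1)))
      ≤ C2 * r ^ N := by
    intro N
    have h : 2 * |z0.im| * Q * (∑ m ∈ Finset.range N, r ^ m * Complex.normSq (u (m + 1)))
        = ‖S ^ N * W N‖ := by
      rw [← hsum N, norm_mul, norm_mul, hIm, hnormQ, Complex.norm_real, Real.norm_eq_abs,
        abs_of_nonneg (show (0:ℝ) ≤ ∑ m ∈ Finset.range N, r ^ m * Complex.normSq (u (m + 1))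
          from Finset.sum_nonneg (fun m _ => mul_nonneg (pow_nonneg hr0.le m) (Complex.normSq_nonneg _)))]
    have hrhs : ‖S ^ N * W N‖ ≤ C * r ^ N := by
      rw [norm_mul, norm_pow, hSre, Complex.norm_real, Real.norm_eq_abs, abs_of_pos hsR0]
      calc (r / Q) ^ N * ‖W N‖ ≤ (r / Q) ^ N * (C * Q ^ N) :=
            mul_le_mul_of_nonneg_left (hWb N) (by positivity)
        _ = C * ((r / Q) * Q) ^ N := by rw [mul_pow]; ring
        _ = C * r ^ N := by rw [div_mul_cancel₀ _ hQ0.ne']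
    rw [← h] at hrhs
    rw [hC2, div_mul_eq_mul_div, le_div_iff₀ (mul_pos hImpos hQ0)]
    calc (∑ m ∈ Finset.range N, r ^ m * Complex.normSq (u (m + 1))) * (2 * |z0.im| * Q)
        = 2 * |z0.im| * Q * (∑ m ∈ Finset.range N, r ^ m * Complex.normSq (u (m + 1))) := by
          ring
      _ ≤ C * r ^ N := hrhs
  clear_value S u v W B K C C2
  -- every u (m+1) vanishes
  have huz : ∀ m0 : ℕ, u (m0 + 1) = 0 := by
    intro m0
    have hnn : 0 ≤ Complex.normSq (u (m0 + 1)) := Complex.normSq_nonneg _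
    have hrm0 : 0 < r ^ m0 := pow_pos hr0 m0
    have htend0 : Tendsto (fun N : ℕ => C2 * r ^ N) atTop (𝓝 0) := by
      simpa using (tendsto_pow_atTop_nhds_zero_of_lt_one hr0.le hr1).const_mul C2
    have hle0 : r ^ m0 * Complex.normSq (u (m0 + 1)) ≤ 0 := by
      apply ge_of_tendsto htend0
      filter_upwards [eventually_gt_atTop m0] with N hN
      refine le_trans ?_ (hSb N)
      exact Finset.single_le_sum (f := fun m => r ^ m * Complex.normSq (u (m + 1)))
        (fun i _ => mul_nonneg (pow_nonneg hr0.le i) (Complex.normSq_nonneg _))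
        (Finset.mem_range.mpr hN)
    have h2 : Complex.normSq (u (m0 + 1)) ≤ 0 := by
      rcases mul_nonpos_iff.mp hle0 with ⟨_, hb⟩ | ⟨ha, _⟩
      · exact hb
      · exact absurd ha (not_le.mpr hrm0)
    exact Complex.normSq_eq_zero.mp (le_antisymm h2 hnn)
  -- contradiction: u m → 1
  have htK : Tendsto (fun m : ℕ => K * B * Q ^ m) atTop (𝓝 0) := by
    simpa using (tendsto_pow_atTop_nhds_zero_of_lt_one hQ0.le hQ1).const_mul (K * B)
  obtain ⟨m, hm⟩ := (htK.eventually (eventually_lt_nhds (by norm_num : (0:ℝ) < 1))).exists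
  have h1 := hue (m + 1)
  rw [huz m] at h1
  have hKB : 0 ≤ K * B := mul_nonneg hK0 hB0.le
  have hmono : K * B * Q ^ (m + 1) ≤ K * B * Q ^ m :=
    mul_le_mul_of_nonneg_left (pow_le_pow_of_le_one hQ0.le hQ1.le (Nat.le_succ m)) hKB
  simp only [zero_sub, norm_neg, norm_one] at h1
  exact lt_irrefl (1 : ℝ) (lt_of_le_of_lt (le_trans h1 hmono) hm)

lemma FF_real_pos {Q r : ℝ} (hQ0 : 0 < Q) (hQ1 : Q < 1) (hr0 : 0 ≤ r) (hr1 : r < 1)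
    {t : ℝ} (ht : t ≤ 0) : FF Q r ((t : ℝ) : ℂ) ≠ 0 := by
  have hsabs : Summable (fun k : ℕ => |cR Q r k * t ^ k|) := by
    apply (summable_core hQ0 hQ1 hr0 hr1 0 (abs_nonneg t)).congr
    intro k
    rw [abs_mul, abs_pow, Nat.add_zero]
  have hsumR : Summable (fun k : ℕ => cR Q r k * t ^ k) := hsabs.of_abs
  have hcast : FF Q r (t : ℂ) = ((∑' k : ℕ, cR Q r k * t ^ k : ℝ) : ℂ) := by
    rw [FF, Complex.ofReal_tsum]
    apply tsum_congr
    intro k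
    push_cast
    ring
  have hnn : ∀ k, 0 ≤ cR Q r k * t ^ k := by
    intro k
    have he : cR Q r k * t ^ k = Q ^ (k * (k + 1) / 2) / (P Q Q k * P r Q k) * (-t) ^ k := by
      rw [cR, neg_pow]
      ring
    rw [he]
    have hp1 := P_pos hQ0 hQ1 hQ0.le hQ1 k
    have hp2 := P_pos hQ0 hQ1 hr0 hr1 k
    have hmt : (0:ℝ) ≤ -t := by linarith
    positivity
  have h1 : (1 : ℝ) ≤ ∑' k : ℕ, cR Q r k * t ^ k := by
    have h := Summable.le_tsum hsumR 0 (fun j _ => hnn j)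
    simpa [cR_zero] using h
  rw [hcast]
  simp only [ne_eq, Complex.ofReal_eq_zero]
  intro hz
  rw [hz] at h1
  linarith

lemma qPochInfC_ne_zero {Q a : ℝ} (hQ0 : 0 < Q) (hQ1 : Q < 1) (ha0 : 0 ≤ a) (ha1 : a < 1) :
    qPochInfC (a : ℂ) (Q : ℂ) ≠ 0 := by
  have hfpos : ∀ j : ℕ, 0 < 1 - a * Q ^ j := fun j => by
    have := factor_lb hQ0 hQ1 ha0 ha1 j; linarith
  have hlogabs : Summable (fun j : ℕ => |Real.log (1 - a * Q ^ j)|) := by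
    apply Summable.of_nonneg_of_le (fun j => abs_nonneg _) _
      ((summable_geometric_of_lt_one hQ0.le hQ1).mul_left (a / (1 - a)))
    intro j
    have hQj : 0 < Q ^ j := pow_pos hQ0 j
    have hQj1 : Q ^ j ≤ 1 := pow_le_one₀ hQ0.le hQ1.le
    have ht0 : 0 ≤ a * Q ^ j := by positivity
    have h1t : 0 < 1 - a * Q ^ j := hfpos j
    rw [abs_of_nonpos (Real.log_nonpos (by linarith) (by linarith))]
    rw [← Real.log_inv]
    have h2 := Real.log_le_sub_one_of_pos (inv_pos.mpr h1t)
    have h3 : (1 - a * Q ^ j)⁻¹ - 1 = (a * Q ^ j) / (1 - a * Q ^ j) := by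
      field_simp
      ring
    have h4 : (a * Q ^ j) / (1 - a * Q ^ j) ≤ (a * Q ^ j) / (1 - a) := by
      gcongr
      nlinarith
    calc Real.log (1 - a * Q ^ j)⁻¹ ≤ (1 - a * Q ^ j)⁻¹ - 1 := h2
      _ = (a * Q ^ j) / (1 - a * Q ^ j) := h3
      _ ≤ (a * Q ^ j) / (1 - a) := h4
      _ = a / (1 - a) * Q ^ j := by ring
  have hlog : Summable (fun j : ℕ => Real.log (1 - a * Q ^ j)) := hlogabs.of_abs
  set L : ℝ := ∑' j : ℕ, Real.log (1 - a * Q ^ j) with hL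
  have hprod : HasProd (fun j : ℕ => 1 - a * Q ^ j) (Real.exp L) := by
    rw [HasProd]
    have hs : Filter.Tendsto (fun s : Finset ℕ => ∑ j ∈ s, Real.log (1 - a * Q ^ j))
        Filter.atTop (𝓝 L) := hlog.hasSum
    have h := (Real.continuous_exp.tendsto L).comp hs
    apply h.congr
    intro s
    simp only [Function.comp_apply]
    rw [Real.exp_sum]
    exact Finset.prod_congr rfl (fun j _ => Real.exp_log (hfpos j))
  have hprodC : HasProd (fun j : ℕ => (1 : ℂ) - (a : ℂ) * (Q : ℂ) ^ j)
      ((Real.exp L : ℝ) : ℂ) := by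
    have h := hprod.map Complex.ofRealHom Complex.continuous_ofReal
    have hfe : (⇑Complex.ofRealHom ∘ fun j : ℕ => 1 - a * Q ^ j)
        = fun j : ℕ => (1 : ℂ) - (a : ℂ) * (Q : ℂ) ^ j := by
      funext j
      simp only [Function.comp_apply, Complex.ofRealHom_eq_coe]
      push_cast
      ring
    rwa [hfe] at h
  rw [qPochInfC, hprodC.tprod_eq]
  simp only [ne_eq, Complex.ofReal_eq_zero]
  exact Real.exp_ne_zero L

lemma qPochC_cast (a Q : ℝ) (k : ℕ) :
    qPochC (a : ℂ) (Q : ℂ) k = ((P a Q k : ℝ) : ℂ) := by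
  rw [qPochC, P]
  push_cast
  rfl

end FF

end Cor32

/-- Hahn–Exton q-Bessel function of real order (principal-branch series). -/
def Jser (ν q : ℝ) (x : ℂ) : ℂ :=
  x ^ (ν : ℂ) * (qPochInfC ((q ^ (ν + 1) : ℝ) : ℂ) (q : ℂ) / qPochInfC (q : ℂ) (q : ℂ)) *
    ∑' k : ℕ, ((-1 : ℂ) ^ k * (q : ℂ) ^ (k * (k + 1) / 2) * x ^ (2 * k)) /
      (qPochC (q : ℂ) (q : ℂ) k * qPochC ((q ^ (ν + 1) : ℝ) : ℂ) (q : ℂ) k)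

open Classical in
/-- Hahn–Exton q-Bessel function, with the convention
`J_n(x;q) = (-1)^n q^{-n/2} J_{-n}(x q^{-n/2};q)` defining nonpositive integer order. -/
def JHE (ν q : ℝ) (x : ℂ) : ℂ :=
  if h : ∃ n : ℕ, ν = -(n : ℝ) then
    (-1 : ℂ) ^ h.choose * ((q ^ ((h.choose : ℝ) / 2) : ℝ) : ℂ) *
      Jser (h.choose : ℝ) q (x * ((q ^ ((h.choose : ℝ) / 2) : ℝ) : ℂ))
  else Jser ν q x

/-- Jackson q-integral `∫₀^z f(x) d_q x`. -/
def qInt (q z : ℝ) (f : ℝ → ℂ) : ℂ :=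
  (((1 - q) * z : ℝ) : ℂ) * ∑' k : ℕ, ((q ^ k : ℝ) : ℂ) * f (z * q ^ k)


/-- The entire part of the Hahn–Exton q-Bessel function:
`x ↦ x^{-ν} J_ν(x;q)` extends to this entire function of `x`. -/
def JHEent (ν q : ℝ) (x : ℂ) : ℂ :=
  (qPochInfC ((q ^ (ν + 1) : ℝ) : ℂ) (q : ℂ) / qPochInfC (q : ℂ) (q : ℂ)) *
    ∑' k : ℕ, ((-1 : ℂ) ^ k * (q : ℂ) ^ (k * (k + 1) / 2) * x ^ (2 * k)) /
      (qPochC (q : ℂ) (q : ℂ) k * qPochC ((q ^ (ν + 1) : ℝ) : ℂ) (q : ℂ) k)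

/-- Corollary 3.2: for `ν > -1` every zero of `J_ν(·;q²)` is real; equivalently,
every complex zero of the entire function `x ↦ x^{-ν} J_ν(x;q²)` is real. -/
theorem cor_3_2 (q : ℝ) (hq0 : 0 < q) (hq1 : q < 1) (ν : ℝ) (hν : -1 < ν) :
    (∀ x : ℂ, JHE ν (q ^ 2) x = 0 → x.im = 0) ∧
    (∀ x : ℂ, JHEent ν (q ^ 2) x = 0 → x.im = 0) := by
  set Q : ℝ := q ^ 2 with hQdef
  have hQ0 : 0 < Q := by positivity
  have hQ1 : Q < 1 := by nlinarith
  have hν1 : 0 < ν + 1 := by linarith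
  have hr0 : 0 < Q ^ (ν + 1) := Real.rpow_pos_of_pos hQ0 _
  have hr1 : Q ^ (ν + 1) < 1 := Real.rpow_lt_one hQ0.le hQ1 hν1
  have hent : ∀ x : ℂ, JHEent ν Q x
      = (qPochInfC ((Q ^ (ν + 1) : ℝ) : ℂ) (Q : ℂ) / qPochInfC (Q : ℂ) (Q : ℂ))
        * Cor32.FF Q (Q ^ (ν + 1)) (x ^ 2) := by
    intro x
    rw [JHEent, Cor32.FF]
    congr 1
    apply tsum_congr
    intro k
    rw [pow_mul, Cor32.qPochC_cast, Cor32.qPochC_cast,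
      show ((Cor32.cR Q (Q ^ (ν + 1)) k : ℝ) : ℂ)
        = ((-1 : ℂ) ^ k * (Q : ℂ) ^ (k * (k + 1) / 2))
          / (((Cor32.P Q Q k : ℝ) : ℂ) * ((Cor32.P (Q ^ (ν + 1)) Q k : ℝ) : ℂ)) from by
        rw [Cor32.cR]; push_cast; ring,
      mul_div_right_comm]
  have part2 : ∀ x : ℂ, JHEent ν Q x = 0 → x.im = 0 := by
    intro x hx
    rw [hent x] at hx
    have hA : qPochInfC ((Q ^ (ν + 1) : ℝ) : ℂ) (Q : ℂ) ≠ 0 :=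
      Cor32.qPochInfC_ne_zero hQ0 hQ1 hr0.le hr1
    have hB : qPochInfC (Q : ℂ) (Q : ℂ) ≠ 0 :=
      Cor32.qPochInfC_ne_zero hQ0 hQ1 hQ0.le hQ1
    have hFF : Cor32.FF Q (Q ^ (ν + 1)) (x ^ 2) = 0 := by
      rcases mul_eq_zero.mp hx with h | h
      · exact absurd h (div_ne_zero hA hB)
      · exact h
    have him : (x ^ 2).im = 0 := Cor32.FF_zero_im hQ0 hQ1 hr0 hr1 hFF
    have hx2 : (x ^ 2 : ℂ) = (((x ^ 2).re : ℝ) : ℂ) := by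
      apply Complex.ext
      · simp
      · simp [him]
    have htpos : 0 < (x ^ 2).re := by
      by_contra hc
      push_neg at hc
      apply Cor32.FF_real_pos hQ0 hQ1 hr0.le hr1 hc
      rw [← hx2]
      exact hFF
    by_contra hxi
    have h2im : (x ^ 2).im = 2 * x.re * x.im := by
      rw [sq, Complex.mul_im]; ring
    have h4 : x.re * x.im = 0 := by
      rw [h2im] at him; linarith
    have hre0 : x.re = 0 := by
      rcases mul_eq_zero.mp h4 with h | h
      · exact h
      · exact absurd h hxi
    have h5 : (x ^ 2).re = x.re ^ 2 - x.im ^ 2 := by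
      rw [sq, Complex.mul_re]; ring
    have h6 : 0 < x.im ^ 2 := lt_of_le_of_ne (sq_nonneg _) (Ne.symm (pow_ne_zero 2 hxi))
    rw [hre0] at h5
    nlinarith
  refine ⟨?_, part2⟩
  intro x hx
  have hJ : JHE ν Q x = Jser ν Q x := by
    rw [JHE]
    split_ifs with h
    · have hspec := h.choose_spec
      have hlt : (h.choose : ℝ) < 1 := by rw [hspec] at hν; linarith
      have hch : h.choose = 0 := Nat.lt_one_iff.mp (by exact_mod_cast hlt)
      have hν0 : ν = 0 := by rw [hspec, hch]; simp
      rw [hch, hν0]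
      norm_num [Real.rpow_zero]
    · rfl
  have hJser : Jser ν Q x = x ^ (ν : ℂ) * JHEent ν Q x := by
    simp only [Jser, JHEent, mul_assoc]
  rw [hJ, hJser] at hx
  rcases mul_eq_zero.mp hx with h | h
  · have hx0 : x = 0 := ((Complex.cpow_eq_zero_iff x (ν : ℂ)).mp h).1
    rw [hx0]
    rfl
  · exact part2 x h

end
end

section
/- Fix q with 0 < q < 1 and let ν > −1. Every nonzero real zero a of J_ν(·;q²) is a simple zero, i.e. the ordinary derivative J_ν′(a;q²) of J_ν(·;q²) at a is nonzero. -/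
open scoped BigOperators

noncomputable section

namespace HEaux

/- ### Elementary facts about triangular numbers and finite q-Pochhammer symbols -/

lemma tri_succ (k : ℕ) : (k+1) * (k+2) / 2 = k * (k+1) / 2 + (k+1) := by
  have h : (k+1) * (k+2) = k * (k+1) + (k+1) * 2 := by ring
  rw [h, Nat.add_mul_div_right _ _ (by norm_num : (0:ℕ) < 2)]

/-- finite q-Pochhammer, real version -/
def qP (y p : ℝ) (k : ℕ) : ℝ := ∏ j ∈ Finset.range k, (1 - y * p ^ j)

variable {y p x : ℝ}

lemma factor_pos (hy0 : 0 ≤ y) (hy1 : y < 1) (hp0 : 0 ≤ p) (hp1 : p ≤ 1) (j : ℕ) :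
    0 < 1 - y * p ^ j := by
  have h1 : p ^ j ≤ 1 := pow_le_one₀ hp0 hp1
  nlinarith [pow_nonneg hp0 j]

lemma qP_pos (hy0 : 0 ≤ y) (hy1 : y < 1) (hp0 : 0 ≤ p) (hp1 : p ≤ 1) (k : ℕ) :
    0 < qP y p k :=
  Finset.prod_pos fun j _ => factor_pos hy0 hy1 hp0 hp1 j

/- ### The infinite product -/

lemma log_summable (hy0 : 0 ≤ y) (hy1 : y < 1) (hp0 : 0 ≤ p) (hp1 : p < 1) :
    Summable (fun j : ℕ => Real.log (1 - y * p ^ j)) := by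
  rw [← summable_neg_iff]
  apply Summable.of_nonneg_of_le (fun j => ?_) (fun j => ?_)
    (((summable_geometric_of_lt_one hp0 hp1)).mul_left (y / (1 - y)))
  · have := factor_pos hy0 hy1 hp0 hp1.le j
    simp only [neg_nonneg]
    exact Real.log_nonpos (by linarith)
      (by nlinarith [pow_nonneg hp0 j, mul_nonneg hy0 (pow_nonneg hp0 j)])
  · set t := y * p ^ j with ht
    have htnn : 0 ≤ t := mul_nonneg hy0 (pow_nonneg hp0 j)
    have hty : t ≤ y := by
      have : p ^ j ≤ 1 := pow_le_one₀ hp0 hp1.le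
      nlinarith
    have h1t : 0 < 1 - t := by linarith
    have key : Real.log ((1-t)⁻¹) ≤ (1-t)⁻¹ - 1 := Real.log_le_sub_one_of_pos (by positivity)
    rw [Real.log_inv] at key
    have h2 : (1-t)⁻¹ - 1 = t / (1-t) := by field_simp; ring
    have h3 : t / (1 - t) ≤ t / (1 - y) :=
      div_le_div_of_nonneg_left htnn (by linarith) (by linarith)
    have : -Real.log (1 - t) ≤ t / (1 - y) := by linarith [key, h2 ▸ key]
    calc -Real.log (1 - t) ≤ t / (1-y) := this
      _ = y / (1-y) * p ^ j := by rw [ht]; ring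

/-- value of the infinite product `(y;p)_∞` -/
def Pinf (y p : ℝ) : ℝ := Real.exp (∑' j : ℕ, Real.log (1 - y * p ^ j))

lemma Pinf_pos : 0 < Pinf y p := Real.exp_pos _

lemma hasProd_qP (hy0 : 0 ≤ y) (hy1 : y < 1) (hp0 : 0 ≤ p) (hp1 : p < 1) :
    HasProd (fun j : ℕ => 1 - y * p ^ j) (Pinf y p) := by
  have h := ((log_summable hy0 hy1 hp0 hp1).hasSum).rexp
  have heq : (Real.exp ∘ fun j : ℕ => Real.log (1 - y * p ^ j)) = fun j => 1 - y * p ^ j := by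
    funext j
    exact Real.exp_log (factor_pos hy0 hy1 hp0 (le_of_lt hp1) j)
  rwa [heq] at h

lemma qP_antitone (hy0 : 0 ≤ y) (hy1 : y < 1) (hp0 : 0 ≤ p) (hp1 : p ≤ 1) :
    Antitone (qP y p) := by
  apply antitone_nat_of_succ_le
  intro k
  rw [qP, Finset.prod_range_succ]
  have h1 := qP_pos hy0 hy1 hp0 hp1 k
  have h2 := factor_pos hy0 hy1 hp0 hp1 k
  have h3 : 1 - y * p ^ k ≤ 1 := by nlinarith [pow_nonneg hp0 k]
  calc qP y p k * (1 - y * p ^ k) ≤ qP y p k * 1 := by nlinarith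
    _ = qP y p k := mul_one _

lemma Pinf_le_qP (hy0 : 0 ≤ y) (hy1 : y < 1) (hp0 : 0 ≤ p) (hp1 : p < 1) (k : ℕ) :
    Pinf y p ≤ qP y p k := by
  have ht := (hasProd_qP hy0 hy1 hp0 hp1).tendsto_prod_nat
  exact le_of_tendsto ht (Filter.eventually_atTop.2 ⟨k, fun m hm =>
    qP_antitone hy0 hy1 hp0 hp1.le hm⟩)

/- ### The coefficients of the entire part of the Hahn–Exton q-Bessel function -/

/-- coefficients -/
def cc (p x : ℝ) (k : ℕ) : ℝ := (-1)^k * p^(k*(k+1)/2) / (qP p p k * qP x p k)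

lemma cc_zero : cc p x 0 = 1 := by simp [cc, qP]

lemma cc_rec (hp0 : 0 < p) (hp1 : p < 1) (hx0 : 0 < x) (hx1 : x < 1) (k : ℕ) :
    cc p x (k+1) * ((1 - p * p^k) * (1 - x * p^k)) = -(p^(k+1)) * cc p x k := by
  have hqp : qP p p k ≠ 0 := ne_of_gt (qP_pos hp0.le hp1 hp0.le hp1.le k)
  have hqx : qP x p k ≠ 0 := ne_of_gt (qP_pos hx0.le hx1 hp0.le hp1.le k)
  have h1 : (1 : ℝ) - p * p^k ≠ 0 := ne_of_gt (factor_pos hp0.le hp1 hp0.le hp1.le k)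
  have h2 : (1 : ℝ) - x * p^k ≠ 0 := ne_of_gt (factor_pos hx0.le hx1 hp0.le hp1.le k)
  have e1 : qP p p (k+1) = qP p p k * (1 - p * p^k) := Finset.prod_range_succ _ _
  have e2 : qP x p (k+1) = qP x p k * (1 - x * p^k) := Finset.prod_range_succ _ _
  have e3 : p^((k+1)*(k+2)/2) = p^(k*(k+1)/2) * p^(k+1) := by
    rw [tri_succ, pow_add]
  rw [cc, cc, e1, e2, e3]
  have h1' : (1 : ℝ) - p^k * p ≠ 0 := by rw [mul_comm]; exact h1
  have h2' : (1 : ℝ) - p^k * x ≠ 0 := by rw [mul_comm]; exact h2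
  field_simp
  ring

/- ### Summability -/

lemma summable_aux (hp0 : 0 < p) (hp1 : p < 1) {r : ℝ} (hr : 0 ≤ r) :
    Summable (fun k : ℕ => p^(k*(k+1)/2) * r^k) := by
  apply summable_of_ratio_norm_eventually_le (r := 1/2) (by norm_num)
  have hten : Filter.Tendsto (fun k : ℕ => p^(k+1) * r) Filter.atTop (nhds 0) := by
    have := (tendsto_pow_atTop_nhds_zero_of_lt_one hp0.le hp1).mul_const r
    rw [zero_mul] at this
    exact this.comp (Filter.tendsto_add_atTop_nat 1)
  filter_upwards [hten.eventually (eventually_le_nhds (by norm_num : (0:ℝ) < 1/2))] with k hk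
  have h1 := tri_succ k
  have hnn : (0:ℝ) ≤ p^(k*(k+1)/2) * r^k := by positivity
  rw [Real.norm_eq_abs, Real.norm_eq_abs, abs_of_nonneg (by positivity), abs_of_nonneg hnn,
    h1, pow_add, pow_succ r]
  calc p ^ (k * (k + 1) / 2) * p ^ (k + 1) * (r ^ k * r)
      = (p^(k+1) * r) * (p ^ (k*(k+1)/2) * r^k) := by ring
    _ ≤ (1/2) * (p ^ (k*(k+1)/2) * r^k) := mul_le_mul_of_nonneg_right hk hnn

/-- a uniform positive lower bound for the denominators -/
def DD (p x : ℝ) : ℝ := Pinf p p * Pinf x p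

lemma DD_pos : 0 < DD p x := mul_pos Pinf_pos Pinf_pos

lemma DD_le (hp0 : 0 < p) (hp1 : p < 1) (hx0 : 0 < x) (hx1 : x < 1) (k : ℕ) :
    DD p x ≤ qP p p k * qP x p k :=
  mul_le_mul (Pinf_le_qP hp0.le hp1 hp0.le hp1 k) (Pinf_le_qP hx0.le hx1 hp0.le hp1 k)
    Pinf_pos.le (qP_pos hp0.le hp1 hp0.le hp1.le k).le

lemma abs_cc_le (hp0 : 0 < p) (hp1 : p < 1) (hx0 : 0 < x) (hx1 : x < 1) (k : ℕ) :
    |cc p x k| ≤ (1 / DD p x) * p^(k*(k+1)/2) := by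
  have hd := DD_le hp0 hp1 hx0 hx1 k
  have hD : (0:ℝ) < DD p x := DD_pos
  rw [cc, abs_div, abs_mul, abs_pow, abs_neg, abs_one, one_pow, one_mul,
    abs_of_nonneg (by positivity : (0:ℝ) ≤ p^(k*(k+1)/2)),
    abs_of_pos (lt_of_lt_of_le hD hd)]
  calc p^(k*(k+1)/2) / (qP p p k * qP x p k) ≤ p^(k*(k+1)/2) / DD p x :=
        div_le_div_of_nonneg_left (by positivity) hD hd
    _ = (1 / DD p x) * p^(k*(k+1)/2) := by ring

lemma summable_cc (hp0 : 0 < p) (hp1 : p < 1) (hx0 : 0 < x) (hx1 : x < 1) (z : ℝ) :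
    Summable (fun k : ℕ => cc p x k * z^k) := by
  apply Summable.of_norm_bounded (g := fun k => (1 / DD p x) * (p^(k*(k+1)/2) * |z|^k))
    ((summable_aux hp0 hp1 (abs_nonneg z)).mul_left (1 / DD p x))
  intro k
  rw [norm_mul, norm_pow, Real.norm_eq_abs, Real.norm_eq_abs]
  calc |cc p x k| * |z|^k ≤ ((1 / DD p x) * p^(k*(k+1)/2)) * |z|^k :=
        mul_le_mul_of_nonneg_right (abs_cc_le hp0 hp1 hx0 hx1 k) (by positivity)
    _ = (1 / DD p x) * (p^(k*(k+1)/2) * |z|^k) := by ring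

/- ### The entire function `G` -/

/-- the entire part of the Hahn–Exton q-Bessel function -/
def GG (p x : ℝ) (z : ℝ) : ℝ := ∑' k : ℕ, cc p x k * z^k

open FormalMultilinearSeries in
lemma GG_hasFPSOB (hp0 : 0 < p) (hp1 : p < 1) (hx0 : 0 < x) (hx1 : x < 1) :
    HasFPowerSeriesOnBall (GG p x) (ofScalars ℝ (cc p x)) 0 ⊤ := by
  have hrad : (ofScalars ℝ (cc p x)).radius = ⊤ := by
    apply radius_eq_top_of_summable_norm
    intro r
    simp only [ofScalars_norm]
    apply Summable.of_nonneg_of_le (fun k => by positivity) (fun k => ?_)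
      (((summable_aux hp0 hp1 r.coe_nonneg).mul_left (1 / DD p x)))
    calc ‖cc p x k‖ * (r:ℝ)^k ≤ ((1 / DD p x) * p^(k*(k+1)/2)) * (r:ℝ)^k :=
          mul_le_mul_of_nonneg_right (abs_cc_le hp0 hp1 hx0 hx1 k) (by positivity)
      _ = (1 / DD p x) * (p^(k*(k+1)/2) * (r:ℝ)^k) := by ring
  have h := (ofScalars ℝ (cc p x)).hasFPowerSeriesOnBall (by rw [hrad]; exact ENNReal.zero_lt_top)
  rw [hrad] at h
  have hfun : (ofScalars ℝ (cc p x)).sum = GG p x := by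
    funext z
    rw [FormalMultilinearSeries.sum]
    exact tsum_congr fun k => by
      rw [FormalMultilinearSeries.ofScalars_apply_eq]; simp [smul_eq_mul]
  rwa [hfun] at h

lemma GG_analytic (hp0 : 0 < p) (hp1 : p < 1) (hx0 : 0 < x) (hx1 : x < 1) :
    AnalyticOnNhd ℝ (GG p x) Set.univ := fun z _ =>
  (GG_hasFPSOB hp0 hp1 hx0 hx1).analyticAt_of_mem (EMetric.mem_ball.2 (edist_lt_top z 0))

lemma GG_hasDerivAt (hp0 : 0 < p) (hp1 : p < 1) (hx0 : 0 < x) (hx1 : x < 1) (w : ℝ) :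
    HasDerivAt (GG p x) (deriv (GG p x) w) w :=
  ((GG_analytic hp0 hp1 hx0 hx1 w (Set.mem_univ w)).differentiableAt).hasDerivAt

lemma GG_cont (hp0 : 0 < p) (hp1 : p < 1) (hx0 : 0 < x) (hx1 : x < 1) :
    Continuous (GG p x) :=
  continuous_iff_continuousAt.2 fun w =>
    (GG_analytic hp0 hp1 hx0 hx1 w (Set.mem_univ w)).continuousAt

lemma GG_deriv_cont (hp0 : 0 < p) (hp1 : p < 1) (hx0 : 0 < x) (hx1 : x < 1) :
    Continuous (deriv (GG p x)) :=
  continuous_iff_continuousAt.2 fun w =>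
    ((GG_analytic hp0 hp1 hx0 hx1).deriv w (Set.mem_univ w)).continuousAt

lemma GG_zero : GG p x 0 = 1 := by
  rw [GG, tsum_eq_single 0 (fun k hk => by rw [zero_pow hk, mul_zero])]
  simp [cc_zero]

/- ### The q-difference equation -/

lemma qde (hp0 : 0 < p) (hp1 : p < 1) (hx0 : 0 < x) (hx1 : x < 1) (z : ℝ) :
    p * GG p x z - (p + x) * GG p x (p*z) + x * GG p x (p*(p*z))
      = -(p*(p*z)) * GG p x (p*z) := by
  have S1 := summable_cc hp0 hp1 hx0 hx1 z
  have S2 := summable_cc hp0 hp1 hx0 hx1 (p*z)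
  have S3 := summable_cc hp0 hp1 hx0 hx1 (p*(p*z))
  set E : ℕ → ℝ := fun k =>
    p * (cc p x k * z^k) - (p + x) * (cc p x k * (p*z)^k)
      + x * (cc p x k * (p*(p*z))^k) with hE
  have hSE : Summable E := ((S1.mul_left p).sub (S2.mul_left (p+x))).add (S3.mul_left x)
  have hL : p * GG p x z - (p + x) * GG p x (p*z) + x * GG p x (p*(p*z)) = ∑' k, E k := by
    rw [GG, GG, GG, ← tsum_mul_left, ← tsum_mul_left, ← tsum_mul_left,
      ← Summable.tsum_sub (S1.mul_left p) (S2.mul_left (p+x))]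
    exact (Summable.tsum_add ((S1.mul_left p).sub (S2.mul_left (p+x))) (S3.mul_left x)).symm
  have hE0 : E 0 = 0 := by simp [hE, cc_zero]
  have hEsucc : ∀ k, E (k+1) = -(p*(p*z)) * (cc p x k * (p*z)^k) := by
    intro k
    have hrec := cc_rec hp0 hp1 hx0 hx1 k
    have hz : (p*z)^(k+1) = p^(k+1) * z^(k+1) := by rw [mul_pow]
    have hz2 : (p*(p*z))^(k+1) = p^(k+1) * p^(k+1) * z^(k+1) := by
      rw [mul_pow, mul_pow]; ring
    simp only [hE]
    rw [hz, hz2, mul_pow]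
    linear_combination (z^(k+1) * p) * hrec
  rw [hL, Summable.tsum_eq_zero_add hSE, hE0, zero_add]
  calc ∑' k, E (k+1) = ∑' k, (-(p*(p*z)) * (cc p x k * (p*z)^k)) := tsum_congr hEsucc
    _ = -(p*(p*z)) * GG p x (p*z) := by rw [tsum_mul_left]; rfl

/- ### Abstract simplicity-of-zeros argument -/

section abstractG
variable (G : ℝ → ℝ)
variable (hG : ∀ w : ℝ, HasDerivAt G (deriv G w) w)
variable (hqde : ∀ z : ℝ, p * G z - (p + x) * G (p*z) + x * G (p*(p*z)) = -(p*(p*z)) * G (p*z))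

include hG hqde in
lemma qde' (z : ℝ) :
    p * deriv G z = -(p*p) * G (p*z) + (p + x - p*(p*z)) * (p * deriv G (p*z))
      - x * (p*p) * deriv G (p*(p*z)) := by
  have hfun : (fun z : ℝ => p * G z)
      = fun z : ℝ => (p + x - p*(p*z)) * G (p*z) - x * G (p*(p*z)) := by
    funext w
    have := hqde w
    ring_nf
    ring_nf at this
    linarith
  have hmul : ∀ w : ℝ, HasDerivAt (fun z : ℝ => p * z) p w := fun w => by
    simpa using (hasDerivAt_id w).const_mul p
  have h1 : HasDerivAt (fun z : ℝ => p * G z) (p * deriv G z) z := (hG z).const_mul p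
  have hGp : HasDerivAt (fun z : ℝ => G (p*z)) (deriv G (p*z) * p) z :=
    (hG (p*z)).comp z (hmul z)
  have hGpp : HasDerivAt (fun z : ℝ => G (p*(p*z))) (deriv G (p*(p*z)) * (p*p)) z := by
    have : HasDerivAt (fun z : ℝ => p*(p*z)) (p*p) z := by
      simpa [mul_assoc] using (hasDerivAt_id z).const_mul (p*p)
    exact (hG (p*(p*z))).comp z this
  have hcoef : HasDerivAt (fun z : ℝ => p + x - p*(p*z)) (-(p*p)) z := by
    have : HasDerivAt (fun z : ℝ => p*(p*z)) (p*p) z := by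
      simpa [mul_assoc] using (hasDerivAt_id z).const_mul (p*p)
    simpa using this.const_sub (p+x)
  have h2 : HasDerivAt (fun z : ℝ => (p + x - p*(p*z)) * G (p*z) - x * G (p*(p*z)))
      (((-(p*p)) * G (p*z) + (p + x - p*(p*z)) * (deriv G (p*z) * p))
        - x * (deriv G (p*(p*z)) * (p*p))) z :=
    (hcoef.mul hGp).sub (hGpp.const_mul x)
  have := h1.unique (hfun ▸ h2)
  rw [this]; ring

variable (ζ : ℝ) (hp0 : 0 < p)

include hG hqde hp0 in
lemma step (k : ℕ) :
    (deriv G (p^k*ζ) * G (p^(k+1)*ζ) - p * G (p^k*ζ) * deriv G (p^(k+1)*ζ))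
      = -p * (G (p^(k+1)*ζ))^2
        + x * (deriv G (p^(k+1)*ζ) * G (p^(k+2)*ζ)
          - p * G (p^(k+1)*ζ) * deriv G (p^(k+2)*ζ)) := by
  have e1 : p * (p^k*ζ) = p^(k+1)*ζ := by ring
  have e2 : p * (p^(k+1)*ζ) = p^(k+2)*ζ := by ring
  have A := hqde (p^k*ζ)
  have B := qde' (p := p) (x := x) G hG hqde (p^k*ζ)
  rw [e1, e2] at A B
  have hpne : p ≠ 0 := ne_of_gt hp0
  have key : p * ((deriv G (p^k*ζ) * G (p^(k+1)*ζ) - p * G (p^k*ζ) * deriv G (p^(k+1)*ζ))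
      - (-p * (G (p^(k+1)*ζ))^2
        + x * (deriv G (p^(k+1)*ζ) * G (p^(k+2)*ζ)
          - p * G (p^(k+1)*ζ) * deriv G (p^(k+2)*ζ)))) = 0 := by
    linear_combination (G (p^(k+1)*ζ)) * B - (p * deriv G (p^(k+1)*ζ)) * A
  rcases mul_eq_zero.1 key with h | h
  · exact absurd h hpne
  · linarith

/-- the Casoratian-type sequence -/
def WW (G : ℝ → ℝ) (p ζ : ℝ) (N : ℕ) : ℝ :=
  deriv G (p^N*ζ) * G (p^(N+1)*ζ) - p * G (p^N*ζ) * deriv G (p^(N+1)*ζ)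

include hG hqde hp0 in
lemma tele (N : ℕ) :
    WW G p ζ 0 = -p * ∑ k ∈ Finset.range N, x^k * (G (p^(k+1)*ζ))^2 + x^N * WW G p ζ N := by
  induction N with
  | zero => simp
  | succ N ih =>
    have hstep := step (p := p) (x := x) G hG hqde ζ hp0 N
    rw [ih, Finset.sum_range_succ]
    show _ = _ + x^(N+1) * (deriv G (p^(N+1)*ζ) * G (p^(N+1+1)*ζ)
      - p * G (p^(N+1)*ζ) * deriv G (p^(N+1+1)*ζ))
    rw [WW]
    rw [hstep]
    ring

variable (hp1 : p < 1) (hx0 : 0 < x) (hx1 : x < 1)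
variable (hcontG : Continuous G) (hcontG' : Continuous (deriv G))
variable (hG0 : G 0 = 1)

include hp0 hp1 hx0 hx1 hG hqde hcontG hcontG' hG0 in
theorem main_zero (hζ : G ζ = 0) : deriv G ζ ≠ 0 := by
  have hplim : Filter.Tendsto (fun k : ℕ => p^k * ζ) Filter.atTop (nhds 0) := by
    simpa using (tendsto_pow_atTop_nhds_zero_of_lt_one hp0.le hp1).mul_const ζ
  have hu : Filter.Tendsto (fun k : ℕ => G (p^k*ζ)) Filter.atTop (nhds 1) := by
    have := (hcontG.continuousAt (x := 0)).tendsto.comp hplim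
    simpa [hG0, Function.comp_def] using this
  have hv : Filter.Tendsto (fun k : ℕ => deriv G (p^k*ζ)) Filter.atTop (nhds (deriv G 0)) :=
    (hcontG'.continuousAt (x := 0)).tendsto.comp hplim
  have hu1 : Filter.Tendsto (fun k : ℕ => G (p^(k+1)*ζ)) Filter.atTop (nhds 1) :=
    hu.comp (Filter.tendsto_add_atTop_nat 1)
  have hv1 : Filter.Tendsto (fun k : ℕ => deriv G (p^(k+1)*ζ)) Filter.atTop
      (nhds (deriv G 0)) :=
    hv.comp (Filter.tendsto_add_atTop_nat 1)
  have hW : Filter.Tendsto (WW G p ζ) Filter.atTop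
      (nhds (deriv G 0 * 1 - p * 1 * deriv G 0)) :=
    (hv.mul hu1).sub ((Filter.Tendsto.const_mul p hu).mul hv1)
  have hxW : Filter.Tendsto (fun N : ℕ => x^N * WW G p ζ N) Filter.atTop (nhds 0) := by
    have := (tendsto_pow_atTop_nhds_zero_of_lt_one hx0.le hx1).mul hW
    simpa using this
  set S : ℕ → ℝ := fun N => ∑ k ∈ Finset.range N, x^k * (G (p^(k+1)*ζ))^2 with hSdef
  have hSN : ∀ N, S N = (x^N * WW G p ζ N - WW G p ζ 0) / p := by
    intro N
    have := tele (p := p) (x := x) G hG hqde ζ hp0 N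
    field_simp
    linarith
  have hSlim : Filter.Tendsto S Filter.atTop (nhds ((0 - WW G p ζ 0)/p)) := by
    rw [hSdef]
    have h : Filter.Tendsto (fun N : ℕ => (x^N * WW G p ζ N - WW G p ζ 0) / p)
        Filter.atTop (nhds ((0 - WW G p ζ 0)/p)) :=
      (hxW.sub tendsto_const_nhds).div_const p
    exact h.congr (fun N => (hSN N).symm)
  obtain ⟨k0, hk0⟩ := Filter.eventually_atTop.1
    (hu1.eventually (eventually_gt_nhds (by norm_num : (1:ℝ)/2 < 1)))
  have hterm : 0 < x^k0 * (G (p^(k0+1)*ζ))^2 := by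
    have h1 := hk0 k0 le_rfl
    have h2 : (0:ℝ) < (G (p^(k0+1)*ζ))^2 := by nlinarith
    positivity
  have hmono : Monotone S := by
    apply monotone_nat_of_le_succ
    intro n
    rw [hSdef]
    simp only
    rw [Finset.sum_range_succ]
    nlinarith [pow_nonneg hx0.le n, sq_nonneg (G (p^(n+1)*ζ))]
  have hle : S (k0+1) ≤ (0 - WW G p ζ 0)/p :=
    ge_of_tendsto hSlim (Filter.eventually_atTop.2 ⟨k0+1, fun m hm => hmono hm⟩)
  have hterm_le : x^k0 * (G (p^(k0+1)*ζ))^2 ≤ S (k0+1) := by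
    rw [hSdef]
    apply Finset.single_le_sum (f := fun k => x^k * (G (p^(k+1)*ζ))^2)
    · intro i _
      positivity
    · exact Finset.mem_range.2 (Nat.lt_succ_self k0)
  have hSpos : 0 < (0 - WW G p ζ 0)/p := lt_of_lt_of_le hterm (le_trans hterm_le hle)
  have hW0neg : WW G p ζ 0 < 0 := by
    by_contra hcon
    push_neg at hcon
    have : (0 - WW G p ζ 0)/p ≤ 0 := div_nonpos_of_nonpos_of_nonneg (by linarith) hp0.le
    linarith
  have hW0 : WW G p ζ 0 = deriv G ζ * G (p*ζ) := by
    rw [WW, pow_zero, pow_one, one_mul, hζ]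
    ring
  intro hcon
  rw [hW0, hcon, zero_mul] at hW0neg
  exact lt_irrefl 0 hW0neg

end abstractG

/-- Main real-analytic result: nonzero zeros of `GG p x` are simple. -/
theorem real_main (hp0 : 0 < p) (hp1 : p < 1) (hx0 : 0 < x) (hx1 : x < 1)
    {ζ : ℝ} (hζ : GG p x ζ = 0) : deriv (GG p x) ζ ≠ 0 :=
  main_zero (GG p x) (GG_hasDerivAt hp0 hp1 hx0 hx1) (qde hp0 hp1 hx0 hx1) ζ hp0 hp1 hx0 hx1
    (GG_cont hp0 hp1 hx0 hx1) (GG_deriv_cont hp0 hp1 hx0 hx1) GG_zero hζ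

/- ### Complex bridge -/

lemma qPochInfC_eq (hy0 : 0 ≤ y) (hy1 : y < 1) (hp0 : 0 ≤ p) (hp1 : p < 1) :
    qPochInfC (y : ℂ) (p : ℂ) = ((Pinf y p : ℝ) : ℂ) := by
  have h := (hasProd_qP hy0 hy1 hp0 hp1).map Complex.ofRealHom.toMonoidHom
    Complex.continuous_ofReal
  have heq : (Complex.ofRealHom.toMonoidHom ∘ fun j : ℕ => 1 - y * p ^ j)
      = fun j : ℕ => 1 - (y:ℂ) * (p:ℂ) ^ j := by
    funext j
    simp only [Function.comp_apply, RingHom.toMonoidHom_eq_coe, MonoidHom.coe_coe,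
      Complex.ofRealHom_eq_coe]
    push_cast
    ring
  rw [heq] at h
  exact h.tprod_eq

lemma qPochC_eq (k : ℕ) : qPochC (y : ℂ) (p : ℂ) k = ((qP y p k : ℝ) : ℂ) := by
  rw [qPochC, qP]
  push_cast
  rfl

lemma Jser_eq_GG (Q ν : ℝ) (hQ0 : 0 < Q) (hQ1 : Q < 1) (hν : -1 < ν) (t : ℝ) :
    Jser ν Q (t : ℂ) = (t : ℂ) ^ (ν : ℂ)
      * (((Pinf (Q^(ν+1)) Q : ℝ) : ℂ) / ((Pinf Q Q : ℝ) : ℂ))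
      * ((GG Q (Q^(ν+1)) (t^2) : ℝ) : ℂ) := by
  set x := Q^(ν+1) with hx
  have hx0 : 0 < x := Real.rpow_pos_of_pos hQ0 _
  have hx1 : x < 1 := Real.rpow_lt_one hQ0.le hQ1 (by linarith)
  rw [Jser, qPochInfC_eq hx0.le hx1 hQ0.le hQ1, qPochInfC_eq hQ0.le hQ1 hQ0.le hQ1]
  congr 1
  have hterm : ∀ k : ℕ, ((-1 : ℂ) ^ k * (Q : ℂ) ^ (k * (k + 1) / 2) * (t:ℂ) ^ (2 * k)) /
      (qPochC (Q : ℂ) (Q : ℂ) k * qPochC ((x : ℝ) : ℂ) (Q : ℂ) k)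
      = ((cc Q x k * (t^2)^k : ℝ) : ℂ) := by
    intro k
    rw [qPochC_eq, qPochC_eq, cc]
    push_cast
    rw [pow_mul]
    ring
  rw [tsum_congr hterm, ← Complex.ofReal_tsum]
  rfl

lemma JHE_eq_Jser (ν Q : ℝ) (hν : -1 < ν) (t : ℂ) : JHE ν Q t = Jser ν Q t := by
  rw [JHE]
  split_ifs with h
  · have hspec := h.choose_spec
    have hchoose : h.choose = 0 := by
      by_contra hne
      have h1 : (1:ℝ) ≤ (h.choose : ℝ) := by
        exact_mod_cast Nat.one_le_iff_ne_zero.2 hne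
      rw [hspec] at hν
      linarith
    rw [hchoose] at hspec ⊢
    simp only [Nat.cast_zero, neg_zero] at hspec
    rw [hspec]
    norm_num
  · rfl

/- ### Derivative of the complex power along the real axis -/

lemma cpow_neg_real (ν : ℝ) {t : ℝ} (ht : t < 0) :
    (t:ℂ)^(ν:ℂ) = (((-t)^ν : ℝ) : ℂ) * Complex.exp ((ν:ℂ) * ((Real.pi : ℂ) * Complex.I)) := by
  have htne : (t:ℂ) ≠ 0 := Complex.ofReal_ne_zero.2 (ne_of_lt ht)
  have hlog : Complex.log (t:ℂ) = ((Real.log (-t) : ℝ) : ℂ) + (Real.pi : ℂ) * Complex.I := by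
    apply Complex.ext
    · simp [Complex.log_re, Complex.norm_real, Real.norm_eq_abs, abs_of_neg ht]
    · simp [Complex.log_im, Complex.arg_ofReal_of_neg ht]
  rw [Complex.cpow_def_of_ne_zero htne, hlog, add_mul, Complex.exp_add]
  congr 1
  · rw [Real.rpow_def_of_pos (by linarith : (0:ℝ) < -t), Complex.ofReal_exp]
    congr 1
    push_cast
    ring
  · ring_nf

lemma hasDerivAt_cpow_real (ν : ℝ) {a : ℝ} (ha : a ≠ 0) :
    ∃ D : ℂ, HasDerivAt (fun t : ℝ => (t:ℂ)^(ν:ℂ)) D a := by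
  rcases lt_or_gt_of_ne ha with hneg | hpos
  · have hR : HasDerivAt (fun t : ℝ => (-t)^ν) (ν * (-a)^(ν-1) * (-1)) a := by
      have h1 : HasDerivAt (fun s : ℝ => s ^ ν) (ν * (-a)^(ν-1)) (-a) :=
        Real.hasDerivAt_rpow_const (Or.inl (neg_ne_zero.2 ha))
      have h2 : HasDerivAt (fun t : ℝ => -t) (-1) a := (hasDerivAt_id a).neg
      exact h1.comp a h2
    have hD : HasDerivAt (fun t : ℝ =>
        (((-t)^ν : ℝ) : ℂ) * Complex.exp ((ν:ℂ) * ((Real.pi : ℂ) * Complex.I)))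
        ((((ν * (-a)^(ν-1) * (-1) : ℝ)) : ℂ)
          * Complex.exp ((ν:ℂ) * ((Real.pi : ℂ) * Complex.I))) a :=
      (hR.ofReal_comp).mul_const _
    refine ⟨_, hD.congr_of_eventuallyEq ?_⟩
    filter_upwards [eventually_lt_nhds hneg] with t ht
    exact cpow_neg_real ν ht
  · have hD : HasDerivAt (fun t : ℝ => ((t^ν : ℝ) : ℂ)) (((ν * a^(ν-1) : ℝ)) : ℂ) a :=
      (Real.hasDerivAt_rpow_const (Or.inl ha)).ofReal_comp
    refine ⟨_, hD.congr_of_eventuallyEq ?_⟩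
    filter_upwards [eventually_gt_nhds hpos] with t ht
    exact (Complex.ofReal_cpow ht.le ν).symm

end HEaux

open HEaux in
/-- Lemma 3.3: for `ν > -1` the nonzero real zeros of `J_ν(·;q²)` are simple:
the ordinary derivative of `J_ν(·;q²)` there is nonzero. -/
theorem lemma_3_3 (q : ℝ) (hq0 : 0 < q) (hq1 : q < 1) (ν : ℝ) (hν : -1 < ν)
    (a : ℝ) (ha : a ≠ 0) (hzero : JHE ν (q ^ 2) (a : ℂ) = 0) :
    deriv (fun t : ℝ => JHE ν (q ^ 2) (t : ℂ)) a ≠ 0 := by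
  set p : ℝ := q ^ 2 with hp
  have hp0 : 0 < p := by positivity
  have hp1 : p < 1 := by nlinarith
  set x : ℝ := p ^ (ν + 1) with hxdef
  have hx0 : 0 < x := Real.rpow_pos_of_pos hp0 _
  have hx1 : x < 1 := Real.rpow_lt_one hp0.le hp1 (by linarith)
  set C : ℂ := ((Pinf x p : ℝ) : ℂ) / ((Pinf p p : ℝ) : ℂ) with hC
  have hCne : C ≠ 0 := div_ne_zero
    (Complex.ofReal_ne_zero.2 (ne_of_gt Pinf_pos))
    (Complex.ofReal_ne_zero.2 (ne_of_gt Pinf_pos))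
  have hfun : (fun t : ℝ => JHE ν p ((t : ℝ) : ℂ))
      = fun t : ℝ => ((t : ℂ) ^ (ν : ℂ) * C) * ((GG p x (t^2) : ℝ) : ℂ) := by
    funext t
    rw [JHE_eq_Jser ν p hν, Jser_eq_GG p ν hp0 hp1 hν t]
  -- extract the real zero
  have hane : ((a : ℂ)) ^ (ν : ℂ) ≠ 0 := by
    intro hzero2
    rw [Complex.cpow_eq_zero_iff] at hzero2
    exact (Complex.ofReal_ne_zero.2 ha) hzero2.1
  have hzero' : ((GG p x (a^2) : ℝ) : ℂ) = 0 := by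
    have h := hzero
    rw [congrFun hfun a] at h
    rcases mul_eq_zero.1 h with h1 | h2
    · rcases mul_eq_zero.1 h1 with h3 | h4
      · exact absurd h3 hane
      · exact absurd h4 hCne
    · exact h2
  have hGGa : GG p x (a^2) = 0 := Complex.ofReal_eq_zero.1 hzero'
  have hder : deriv (GG p x) (a^2) ≠ 0 := real_main hp0 hp1 hx0 hx1 hGGa
  -- compute the derivative
  obtain ⟨D, hA0⟩ := hasDerivAt_cpow_real ν ha
  have hA : HasDerivAt (fun t : ℝ => (t : ℂ) ^ (ν : ℂ) * C) (D * C) a := hA0.mul_const C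
  have hBreal : HasDerivAt (fun t : ℝ => GG p x (t^2)) (deriv (GG p x) (a^2) * (2*a)) a := by
    have hpow : HasDerivAt (fun t : ℝ => t^2) (2*a) a := by
      simpa using hasDerivAt_pow 2 a
    exact (GG_hasDerivAt hp0 hp1 hx0 hx1 (a^2)).comp a hpow
  have hB : HasDerivAt (fun t : ℝ => ((GG p x (t^2) : ℝ) : ℂ))
      (((deriv (GG p x) (a^2) * (2*a) : ℝ)) : ℂ) a := hBreal.ofReal_comp
  have hF : HasDerivAt (fun t : ℝ => ((t : ℂ) ^ (ν : ℂ) * C) * ((GG p x (t^2) : ℝ) : ℂ))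
      (D * C * ((GG p x (a^2) : ℝ) : ℂ)
        + ((a : ℂ) ^ (ν : ℂ) * C) * (((deriv (GG p x) (a^2) * (2*a) : ℝ)) : ℂ)) a :=
    hA.mul hB
  rw [hfun, hF.deriv]
  rw [hGGa]
  simp only [Complex.ofReal_zero, mul_zero, zero_add]
  apply mul_ne_zero
  · exact mul_ne_zero hane hCne
  · rw [Complex.ofReal_ne_zero]
    exact mul_ne_zero hder (by intro h; apply ha; linarith [h])

end
end

section
/- Fix q with 0 < q < 1 and let ν > −1. The set of positive real zeros of J_ν(·;q²) is countably infinite, and every positive zero a is simple, i.e. the ordinary derivative J_ν′(a;q²) is nonzero. -/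
open scoped BigOperators

noncomputable section

namespace Thm34
open Filter Finset FormalMultilinearSeries


def Ap (r : ℝ) (k : ℕ) : ℝ := ∏ j ∈ Finset.range k, (1 - r ^ (j+1))
def Bp (r ρ : ℝ) (k : ℕ) : ℝ := ∏ j ∈ Finset.range k, (1 - ρ * r ^ j)
def cc (r ρ : ℝ) (k : ℕ) : ℝ := ((-1)^k * r ^ (k*(k+1)/2)) / (Ap r k * Bp r ρ k)

variable {r ρ : ℝ}

lemma fac1_pos (hr0 : 0 < r) (hr1 : r < 1) (k : ℕ) : 0 < 1 - r ^ (k+1) := by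
  have : r ^ (k+1) < 1 := pow_lt_one₀ hr0.le hr1 (Nat.succ_ne_zero k)
  linarith

lemma fac2_pos (hr0 : 0 < r) (hr1 : r < 1) (hρ0 : 0 < ρ) (hρ1 : ρ < 1) (k : ℕ) :
    0 < 1 - ρ * r ^ k := by
  have h1 : r ^ k ≤ 1 := pow_le_one₀ hr0.le hr1.le
  nlinarith

lemma fac1_ge (hr0 : 0 < r) (hr1 : r < 1) (k : ℕ) : 1 - r ≤ 1 - r ^ (k+1) := by
  have : r ^ (k+1) ≤ r := by
    calc r ^ (k+1) ≤ r ^ 1 := pow_le_pow_of_le_one hr0.le hr1.le (by omega)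
    _ = r := pow_one r
  linarith

lemma fac2_ge (hr0 : 0 < r) (hr1 : r < 1) (hρ0 : 0 < ρ) (k : ℕ) :
    1 - ρ ≤ 1 - ρ * r ^ k := by
  have h1 : r ^ k ≤ 1 := pow_le_one₀ hr0.le hr1.le
  nlinarith

lemma Ap_pos (hr0 : 0 < r) (hr1 : r < 1) (k : ℕ) : 0 < Ap r k :=
  Finset.prod_pos (fun j _ => fac1_pos hr0 hr1 j)

lemma Bp_pos (hr0 : 0 < r) (hr1 : r < 1) (hρ0 : 0 < ρ) (hρ1 : ρ < 1) (k : ℕ) :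
    0 < Bp r ρ k :=
  Finset.prod_pos (fun j _ => fac2_pos hr0 hr1 hρ0 hρ1 j)

lemma cc_ne_zero (hr0 : 0 < r) (hr1 : r < 1) (hρ0 : 0 < ρ) (hρ1 : ρ < 1) (k : ℕ) :
    cc r ρ k ≠ 0 := by
  apply div_ne_zero
  · exact mul_ne_zero (pow_ne_zero _ (by norm_num)) (pow_ne_zero _ hr0.ne')
  · exact mul_ne_zero (Ap_pos hr0 hr1 k).ne' (Bp_pos hr0 hr1 hρ0 hρ1 k).ne'

lemma cc_zero : cc r ρ 0 = 1 := by simp [cc, Ap, Bp]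

lemma mkk (k : ℕ) : (k+1)*(k+1+1)/2 = k*(k+1)/2 + (k+1) := by
  have h2 : (k+1)*(k+1+1) = k*(k+1) + 2*(k+1) := by ring
  rw [h2, Nat.add_mul_div_left _ _ (by norm_num : 0 < 2)]

lemma cc_rec (hr0 : 0 < r) (hr1 : r < 1) (hρ0 : 0 < ρ) (hρ1 : ρ < 1) (k : ℕ) :
    (1 - r ^ (k+1)) * (1 - ρ * r ^ k) * cc r ρ (k+1) = -(r^(k+1)) * cc r ρ k := by
  have hA := (Ap_pos hr0 hr1 k).ne'
  have hB := (Bp_pos hr0 hr1 hρ0 hρ1 k).ne'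
  have h1 := (fac1_pos hr0 hr1 k).ne'
  have h2 := (fac2_pos hr0 hr1 hρ0 hρ1 k).ne'
  have hm : r ^ ((k+1)*(k+1+1)/2) = r^(k*(k+1)/2) * r^(k+1) := by rw [mkk, pow_add]
  unfold cc Ap Bp at *
  rw [hm, Finset.prod_range_succ, Finset.prod_range_succ]
  field_simp
  ring

lemma abs_cc_succ_le (hr0 : 0 < r) (hr1 : r < 1) (hρ0 : 0 < ρ) (hρ1 : ρ < 1) (k : ℕ) :
    |cc r ρ (k+1)| ≤ r^(k+1) / ((1-r)*(1-ρ)) * |cc r ρ k| := by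
  have h1 := fac1_pos hr0 hr1 k
  have h2 := fac2_pos hr0 hr1 hρ0 hρ1 k
  have key : cc r ρ (k+1) = -(r^(k+1)) * cc r ρ k / ((1 - r ^ (k+1)) * (1 - ρ * r ^ k)) := by
    field_simp
    linarith [cc_rec hr0 hr1 hρ0 hρ1 k]
  rw [key, abs_div, abs_mul, abs_neg, abs_of_pos (pow_pos hr0 _),
    abs_of_pos (mul_pos h1 h2)]
  rw [div_le_iff₀ (mul_pos h1 h2), div_mul_eq_mul_div, div_mul_eq_mul_div,
    le_div_iff₀ (by nlinarith : (0:ℝ) < (1-r)*(1-ρ))]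
  have hle : (1-r)*(1-ρ) ≤ (1 - r ^ (k+1)) * (1 - ρ * r ^ k) := by
    apply mul_le_mul (fac1_ge hr0 hr1 k) (fac2_ge hr0 hr1 hρ0 k) (by nlinarith) h1.le
  have : (0:ℝ) ≤ r^(k+1) * |cc r ρ k| := by positivity
  nlinarith [abs_nonneg (cc r ρ k), pow_pos hr0 (k+1)]

lemma summable_abs_cc (hr0 : 0 < r) (hr1 : r < 1) (hρ0 : 0 < ρ) (hρ1 : ρ < 1)
    {s : ℝ} (hs : 0 ≤ s) : Summable (fun k => |cc r ρ k| * s^k) := by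
  set K : ℝ := ((1-r)*(1-ρ))⁻¹ with hK
  have hK0 : 0 ≤ K := by
    have h : (0:ℝ) < (1-r)*(1-ρ) := by nlinarith
    rw [hK]; exact inv_nonneg.mpr h.le
  apply summable_of_ratio_norm_eventually_le (r := 1/2) (by norm_num)
  have htend : Tendsto (fun k : ℕ => r^(k+1) * K * s) atTop (nhds 0) := by
    have := (tendsto_pow_atTop_nhds_zero_of_lt_one hr0.le hr1).mul_const (K * s)
    simpa [pow_succ, mul_comm, mul_assoc, mul_left_comm] using
      (this.const_mul r).congr (by intro n; ring)
  have hev : ∀ᶠ k : ℕ in atTop, r^(k+1) * K * s ≤ 1/2 :=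
    htend.eventually (ge_mem_nhds (by norm_num))
  filter_upwards [hev] with k hk
  have hb := abs_cc_succ_le hr0 hr1 hρ0 hρ1 k
  have hnn : (0:ℝ) ≤ |cc r ρ k| * s ^ k := by positivity
  rw [Real.norm_eq_abs, Real.norm_eq_abs, abs_of_nonneg (by positivity),
    abs_of_nonneg hnn]
  calc |cc r ρ (k+1)| * s^(k+1) ≤ (r^(k+1) / ((1-r)*(1-ρ)) * |cc r ρ k|) * s^(k+1) := by
        apply mul_le_mul_of_nonneg_right hb (by positivity)
    _ = (r^(k+1) * K * s) * (|cc r ρ k| * s^k) := by rw [hK, pow_succ]; ring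
    _ ≤ 1/2 * (|cc r ρ k| * s^k) := mul_le_mul_of_nonneg_right hk hnn

lemma summable_norm_cc (hr0 : 0 < r) (hr1 : r < 1) (hρ0 : 0 < ρ) (hρ1 : ρ < 1)
    (z : ℂ) : Summable (fun k => ‖(cc r ρ k : ℂ) * z^k‖) := by
  have := summable_abs_cc hr0 hr1 hρ0 hρ1 (norm_nonneg z)
  refine this.congr fun k => ?_
  rw [norm_mul, norm_pow, Complex.norm_real, Real.norm_eq_abs]

lemma summable_cc (hr0 : 0 < r) (hr1 : r < 1) (hρ0 : 0 < ρ) (hρ1 : ρ < 1)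
    (z : ℂ) : Summable (fun k => (cc r ρ k : ℂ) * z^k) :=
  (summable_norm_cc hr0 hr1 hρ0 hρ1 z).of_norm

def Fc (r ρ : ℝ) : ℂ → ℂ := ofScalarsSum (fun k => (cc r ρ k : ℂ))

lemma Fc_eq (z : ℂ) : Fc r ρ z = ∑' k, (cc r ρ k : ℂ) * z^k := by
  rw [Fc, ofScalars_sum_eq]
  simp [smul_eq_mul]

lemma radius_top (hr0 : 0 < r) (hr1 : r < 1) (hρ0 : 0 < ρ) (hρ1 : ρ < 1) :
    (ofScalars ℂ (fun k => (cc r ρ k : ℂ))).radius = ⊤ := by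
  apply ofScalars_radius_eq_top_of_tendsto
  · exact Filter.Eventually.of_forall fun k => by
      simpa using cc_ne_zero hr0 hr1 hρ0 hρ1 k
  · have hb : ∀ k : ℕ, ‖(cc r ρ (k+1) : ℂ)‖ / ‖(cc r ρ k : ℂ)‖ ≤ r^(k+1) * ((1-r)*(1-ρ))⁻¹ := by
      intro k
      rw [Complex.norm_real, Complex.norm_real, Real.norm_eq_abs, Real.norm_eq_abs]
      rw [div_le_iff₀ (abs_pos.mpr (cc_ne_zero hr0 hr1 hρ0 hρ1 k))]
      have := abs_cc_succ_le hr0 hr1 hρ0 hρ1 k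
      rw [div_eq_mul_inv] at this
      linarith
    have h0 : ∀ k : ℕ, 0 ≤ ‖(cc r ρ (k+1) : ℂ)‖ / ‖(cc r ρ k : ℂ)‖ := fun k => by positivity
    have htend : Tendsto (fun k : ℕ => r^(k+1) * ((1-r)*(1-ρ))⁻¹) atTop (nhds 0) := by
      have := (tendsto_pow_atTop_nhds_zero_of_lt_one hr0.le hr1).mul_const (((1-r)*(1-ρ))⁻¹)
      have h2 := this.const_mul r
      simp only [mul_zero, zero_mul] at h2 ⊢
      exact h2.congr (by intro n; rw [pow_succ]; ring)
    exact squeeze_zero h0 hb htend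

lemma hasFPS (hr0 : 0 < r) (hr1 : r < 1) (hρ0 : 0 < ρ) (hρ1 : ρ < 1) :
    HasFPowerSeriesOnBall (Fc r ρ) (ofScalars ℂ (fun k => (cc r ρ k : ℂ))) 0 ⊤ := by
  have h := FormalMultilinearSeries.hasFPowerSeriesOnBall
    (p := ofScalars ℂ (fun k => (cc r ρ k : ℂ)))
    (by rw [radius_top hr0 hr1 hρ0 hρ1]; exact ENNReal.zero_lt_top)
  rwa [radius_top hr0 hr1 hρ0 hρ1] at h

lemma analyticFc (hr0 : 0 < r) (hr1 : r < 1) (hρ0 : 0 < ρ) (hρ1 : ρ < 1) (z : ℂ) :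
    AnalyticAt ℂ (Fc r ρ) z := by
  apply (hasFPS hr0 hr1 hρ0 hρ1).analyticAt_of_mem
  simp [EMetric.mem_ball, edist_lt_top]

lemma Fc_zero : Fc r ρ 0 = 1 := by
  rw [Fc_eq, tsum_eq_single 0]
  · simp [cc_zero]
  · intro k hk
    rcases Nat.exists_eq_succ_of_ne_zero hk with ⟨m, rfl⟩
    simp [pow_succ]

lemma contFc (hr0 : 0 < r) (hr1 : r < 1) (hρ0 : 0 < ρ) (hρ1 : ρ < 1) :
    Continuous (Fc r ρ) := by
  rw [continuous_iff_continuousAt]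
  exact fun z => (analyticFc hr0 hr1 hρ0 hρ1 z).continuousAt

lemma hderivFc (hr0 : 0 < r) (hr1 : r < 1) (hρ0 : 0 < ρ) (hρ1 : ρ < 1) (z : ℂ) :
    HasDerivAt (Fc r ρ) (deriv (Fc r ρ) z) z :=
  ((analyticFc hr0 hr1 hρ0 hρ1 z).differentiableAt).hasDerivAt

lemma contDerivFc (hr0 : 0 < r) (hr1 : r < 1) (hρ0 : 0 < ρ) (hρ1 : ρ < 1) :
    Continuous (deriv (Fc r ρ)) := by
  have hAOn : AnalyticOnNhd ℂ (Fc r ρ) Set.univ := fun z _ => analyticFc hr0 hr1 hρ0 hρ1 z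
  rw [continuous_iff_continuousAt]
  exact fun z => ((hAOn.deriv) z (Set.mem_univ z)).continuousAt

lemma star_id (hr0 : 0 < r) (hr1 : r < 1) (hρ0 : 0 < ρ) (hρ1 : ρ < 1) (z : ℂ) :
    (r:ℂ) * Fc r ρ z =
      ((r:ℂ) + (ρ:ℂ) - (r:ℂ)^2*z) * Fc r ρ ((r:ℂ)*z) - (ρ:ℂ) * Fc r ρ ((r:ℂ)^2*z) := by
  set K : ℂ := (r:ℂ) + (ρ:ℂ) - (r:ℂ)^2*z with hKdef
  set γ : ℕ → ℂ := fun k => (cc r ρ k : ℂ) * z^k * (1-(r:ℂ)^k) * ((r:ℂ)-(ρ:ℂ)*(r:ℂ)^k)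
    with hγdef
  have hrecC : ∀ k : ℕ, ((1:ℂ) - (r:ℂ)^(k+1)) * (1 - (ρ:ℂ)*(r:ℂ)^k) * (cc r ρ (k+1) : ℂ)
      = -((r:ℂ)^(k+1)) * (cc r ρ k : ℂ) := by
    intro k
    exact_mod_cast congrArg Complex.ofReal (cc_rec hr0 hr1 hρ0 hρ1 k)
  have h1 : HasSum (fun k => (r:ℂ) * ((cc r ρ k:ℂ)*z^k)) ((r:ℂ) * Fc r ρ z) := by
    rw [Fc_eq]; exact (summable_cc hr0 hr1 hρ0 hρ1 z).hasSum.mul_left _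
  have h2 : HasSum (fun k => K * ((cc r ρ k:ℂ)*((r:ℂ)*z)^k)) (K * Fc r ρ ((r:ℂ)*z)) := by
    rw [Fc_eq]; exact (summable_cc hr0 hr1 hρ0 hρ1 _).hasSum.mul_left _
  have h3 : HasSum (fun k => (ρ:ℂ) * ((cc r ρ k:ℂ)*((r:ℂ)^2*z)^k)) ((ρ:ℂ) * Fc r ρ ((r:ℂ)^2*z)) := by
    rw [Fc_eq]; exact (summable_cc hr0 hr1 hρ0 hρ1 _).hasSum.mul_left _
  have h123 := (h1.sub h2).add h3
  have hu : (fun k => (r:ℂ) * ((cc r ρ k:ℂ)*z^k) - K * ((cc r ρ k:ℂ)*((r:ℂ)*z)^k)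
      + (ρ:ℂ) * ((cc r ρ k:ℂ)*((r:ℂ)^2*z)^k)) = fun k => γ k - γ (k+1) := by
    funext k
    simp only [hγdef, hKdef]
    linear_combination ((r:ℂ)*z^(k+1)) * hrecC k
  rw [hu] at h123
  have htendγ : Tendsto γ atTop (nhds 0) := by
    refine squeeze_zero_norm (a := fun k => ‖(cc r ρ k:ℂ)*z^k‖ * 2) ?_ ?_
    · intro k
      have e1 : ‖(1-(r:ℂ)^k)‖ ≤ 1 := by
        have : (1-(r:ℂ)^k) = ((1 - r^k : ℝ) : ℂ) := by push_cast; ring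
        rw [this, Complex.norm_real, Real.norm_eq_abs, abs_le]
        constructor
        · nlinarith [pow_le_one₀ hr0.le hr1.le (n := k)]
        · nlinarith [pow_nonneg hr0.le k]
      have e2 : ‖((r:ℂ)-(ρ:ℂ)*(r:ℂ)^k)‖ ≤ 2 := by
        have : ((r:ℂ)-(ρ:ℂ)*(r:ℂ)^k) = ((r - ρ * r^k : ℝ) : ℂ) := by push_cast; ring
        rw [this, Complex.norm_real, Real.norm_eq_abs, abs_le]
        constructor
        · nlinarith [pow_le_one₀ hr0.le hr1.le (n := k), pow_nonneg hr0.le k]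
        · nlinarith [pow_le_one₀ hr0.le hr1.le (n := k), pow_nonneg hr0.le k]
      calc ‖γ k‖ = ‖(cc r ρ k:ℂ)*z^k‖ * ‖(1-(r:ℂ)^k)‖ * ‖((r:ℂ)-(ρ:ℂ)*(r:ℂ)^k)‖ := by
            simp [hγdef, norm_mul]
        _ ≤ ‖(cc r ρ k:ℂ)*z^k‖ * 1 * 2 := by
            apply mul_le_mul (mul_le_mul le_rfl e1 (norm_nonneg _) (norm_nonneg _)) e2
              (norm_nonneg _) (by positivity)
        _ = ‖(cc r ρ k:ℂ)*z^k‖ * 2 := by ring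
    · simpa using ((summable_norm_cc hr0 hr1 hρ0 hρ1 z).tendsto_atTop_zero).mul_const 2
  have hps : (fun N => ∑ k ∈ range N, (γ k - γ (k+1))) = fun N => γ 0 - γ N := by
    funext N
    exact Finset.sum_range_sub' γ N
  have hγ0 : γ 0 = 0 := by simp [hγdef]
  have hT2 : Tendsto (fun N => ∑ k ∈ range N, (γ k - γ (k+1))) atTop (nhds 0) := by
    rw [hps]
    simpa [hγ0] using (tendsto_const_nhds (x := γ 0)).sub htendγ
  have hS := tendsto_nhds_unique h123.tendsto_sum_nat hT2
  linear_combination hS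

lemma deriv_id (hr0 : 0 < r) (hr1 : r < 1) (hρ0 : 0 < ρ) (hρ1 : ρ < 1) (z : ℂ) :
    (r:ℂ) * deriv (Fc r ρ) z =
      -(r:ℂ)^2 * Fc r ρ ((r:ℂ)*z)
      + ((r:ℂ) + (ρ:ℂ) - (r:ℂ)^2*z) * ((r:ℂ) * deriv (Fc r ρ) ((r:ℂ)*z))
      - (ρ:ℂ) * ((r:ℂ)^2 * deriv (Fc r ρ) ((r:ℂ)^2*z)) := by
  have hG : HasDerivAt (fun w => (r:ℂ) * Fc r ρ w) ((r:ℂ) * deriv (Fc r ρ) z) z :=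
    (hderivFc hr0 hr1 hρ0 hρ1 z).const_mul _
  have hin1 : HasDerivAt (fun w : ℂ => (r:ℂ) * w) (r:ℂ) z := by
    simpa using (hasDerivAt_id z).const_mul (r:ℂ)
  have hin2 : HasDerivAt (fun w : ℂ => (r:ℂ)^2 * w) ((r:ℂ)^2) z := by
    simpa using (hasDerivAt_id z).const_mul ((r:ℂ)^2)
  have hc1 : HasDerivAt (fun w => Fc r ρ ((r:ℂ)*w)) ((deriv (Fc r ρ) ((r:ℂ)*z)) * (r:ℂ)) z :=
    (hderivFc hr0 hr1 hρ0 hρ1 ((r:ℂ)*z)).comp z hin1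
  have hc2 : HasDerivAt (fun w => Fc r ρ ((r:ℂ)^2*w))
      ((deriv (Fc r ρ) ((r:ℂ)^2*z)) * (r:ℂ)^2) z :=
    (hderivFc hr0 hr1 hρ0 hρ1 ((r:ℂ)^2*z)).comp z hin2
  have hK : HasDerivAt (fun w : ℂ => (r:ℂ) + (ρ:ℂ) - (r:ℂ)^2*w) (-(r:ℂ)^2) z := by
    simpa using (hin2.const_sub ((r:ℂ) + (ρ:ℂ)))
  have hH : HasDerivAt (fun w => ((r:ℂ) + (ρ:ℂ) - (r:ℂ)^2*w) * Fc r ρ ((r:ℂ)*w)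
      - (ρ:ℂ) * Fc r ρ ((r:ℂ)^2*w))
      ((-(r:ℂ)^2) * Fc r ρ ((r:ℂ)*z)
        + ((r:ℂ) + (ρ:ℂ) - (r:ℂ)^2*z) * ((deriv (Fc r ρ) ((r:ℂ)*z)) * (r:ℂ))
        - (ρ:ℂ) * ((deriv (Fc r ρ) ((r:ℂ)^2*z)) * (r:ℂ)^2)) z :=
    (hK.mul hc1).sub (hc2.const_mul _)
  have hfun : (fun w => (r:ℂ) * Fc r ρ w) = (fun w => ((r:ℂ) + (ρ:ℂ) - (r:ℂ)^2*w) * Fc r ρ ((r:ℂ)*w)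
      - (ρ:ℂ) * Fc r ρ ((r:ℂ)^2*w)) := by
    funext w
    exact star_id hr0 hr1 hρ0 hρ1 w
  rw [hfun] at hG
  have := hH.unique hG
  linear_combination this.symm

def Fr (r ρ : ℝ) (x : ℝ) : ℝ := ∑' k, cc r ρ k * x^k

lemma Fc_ofReal (x : ℝ) : Fc r ρ (x:ℂ) = ((Fr r ρ x : ℝ):ℂ) := by
  rw [Fc_eq, Fr, Complex.ofReal_tsum]
  exact tsum_congr fun k => by push_cast; ring

lemma Fr_cont (hr0 : 0 < r) (hr1 : r < 1) (hρ0 : 0 < ρ) (hρ1 : ρ < 1) :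
    Continuous (Fr r ρ) := by
  have : Fr r ρ = fun x : ℝ => (Fc r ρ (x:ℂ)).re := by
    funext x; rw [Fc_ofReal]; simp
  rw [this]
  exact Complex.continuous_re.comp ((contFc hr0 hr1 hρ0 hρ1).comp Complex.continuous_ofReal)

lemma Fr_zero : Fr r ρ 0 = 1 := by
  have h : ((Fr r ρ 0 : ℝ):ℂ) = 1 := by
    rw [← Fc_ofReal]; simpa using Fc_zero (r := r) (ρ := ρ)
  exact_mod_cast h

lemma Fc_simple (hr0 : 0 < r) (hr1 : r < 1) (hρ0 : 0 < ρ) (hρ1 : ρ < 1)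
    (t₀ : ℝ) (h0 : Fc r ρ ((t₀:ℝ):ℂ) = 0) : deriv (Fc r ρ) ((t₀:ℝ):ℂ) ≠ 0 := by
  intro hd
  set f : ℕ → ℂ := fun n => Fc r ρ ((r^n * t₀ : ℝ):ℂ) with hfdef
  set e : ℕ → ℂ := fun n => (r:ℂ)^n * deriv (Fc r ρ) ((r^n * t₀ : ℝ):ℂ) with hedef
  set V : ℕ → ℂ := fun n => f n * e (n+1) - e n * f (n+1) with hVdef
  have hz : ∀ n : ℕ, ((r^(n+1) * t₀ : ℝ):ℂ) = (r:ℂ) * ((r^n * t₀ : ℝ):ℂ) := by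
    intro n; push_cast; ring
  have hz2 : ∀ n : ℕ, ((r^(n+2) * t₀ : ℝ):ℂ) = (r:ℂ)^2 * ((r^n * t₀ : ℝ):ℂ) := by
    intro n; push_cast; ring
  have R1 : ∀ n : ℕ, (r:ℂ) * f n
      = ((r:ℂ) + (ρ:ℂ) - ((r^(n+2) * t₀ : ℝ):ℂ)) * f (n+1) - (ρ:ℂ) * f (n+2) := by
    intro n
    have := star_id hr0 hr1 hρ0 hρ1 ((r^n * t₀ : ℝ):ℂ)
    rw [← hz n, ← hz2 n] at this
    simpa [hfdef] using this
  have R2 : ∀ n : ℕ, (r:ℂ) * e n = -((r:ℂ)^(n+2)) * f (n+1)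
      + ((r:ℂ) + (ρ:ℂ) - ((r^(n+2) * t₀ : ℝ):ℂ)) * e (n+1) - (ρ:ℂ) * e (n+2) := by
    intro n
    have h1 := deriv_id hr0 hr1 hρ0 hρ1 ((r^n * t₀ : ℝ):ℂ)
    rw [← hz n, ← hz2 n] at h1
    have h2 := congrArg (fun w => (r:ℂ)^n * w) h1
    simp only [hfdef, hedef]
    linear_combination h2
  have R3 : ∀ n : ℕ, (r:ℂ) * V n = (ρ:ℂ) * V (n+1) + (r:ℂ)^(n+2) * (f (n+1))^2 := by
    intro n
    simp only [hVdef]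
    linear_combination (e (n+1)) * R1 n - (f (n+1)) * R2 n
  set S : ℕ → ℂ := fun N => ∑ n ∈ Finset.range N, (ρ:ℂ)^n * (f (n+1))^2 with hSdef
  have hId : ∀ N : ℕ, (r:ℂ)^N * V 0 - (ρ:ℂ)^N * V N = (r:ℂ)^(N+1) * S N := by
    intro N
    induction N with
    | zero => simp [hSdef]
    | succ N ih =>
      simp only [hSdef, Finset.sum_range_succ] at ih ⊢
      have hR3 := R3 N
      rw [pow_succ, pow_succ, pow_succ]
      linear_combination (r:ℂ) * ih + (ρ:ℂ)^N * hR3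
  have hV0 : V 0 = 0 := by
    simp only [hVdef, hfdef, hedef]
    norm_num
    simp [h0, hd]
  set W : ℕ → ℂ := fun n => f n * ((r:ℂ) * deriv (Fc r ρ) ((r^(n+1) * t₀ : ℝ):ℂ))
      - deriv (Fc r ρ) ((r^n * t₀ : ℝ):ℂ) * f (n+1) with hWdef
  have hVW : ∀ n, V n = (r:ℂ)^n * W n := by
    intro n
    simp only [hVdef, hWdef, hedef]
    ring
  have hrn : ∀ N : ℕ, ((r:ℂ)^N) ≠ 0 :=
    fun N => pow_ne_zero _ (by exact_mod_cast hr0.ne')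
  have hSW : ∀ N, (r:ℂ) * S N = -((ρ:ℂ)^N) * W N := by
    intro N
    have h := hId N
    rw [hV0, hVW N] at h
    apply mul_left_cancel₀ (hrn N)
    rw [pow_succ] at h
    linear_combination -h
  -- limits
  have htz : Tendsto (fun n : ℕ => ((r^n * t₀ : ℝ):ℂ)) atTop (nhds 0) := by
    have h1 : Tendsto (fun n : ℕ => r^n * t₀) atTop (nhds 0) := by
      simpa using (tendsto_pow_atTop_nhds_zero_of_lt_one
        (le_of_lt hr0) hr1).mul_const t₀
    have h2 := (Complex.continuous_ofReal.tendsto 0).comp h1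
    rw [Complex.ofReal_zero] at h2
    exact h2.congr (fun n => rfl)
  have htz1 : Tendsto (fun n : ℕ => ((r^(n+1) * t₀ : ℝ):ℂ)) atTop (nhds 0) :=
    htz.comp (tendsto_add_atTop_nat 1)
  have hfl : Tendsto f atTop (nhds 1) := by
    have := ((contFc hr0 hr1 hρ0 hρ1).tendsto 0).comp htz
    simpa [hfdef, Fc_zero, Function.comp_def] using this
  have hfl1 : Tendsto (fun n => f (n+1)) atTop (nhds 1) := hfl.comp (tendsto_add_atTop_nat 1)
  have hdl : Tendsto (fun n : ℕ => deriv (Fc r ρ) ((r^n * t₀ : ℝ):ℂ)) atTop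
      (nhds (deriv (Fc r ρ) 0)) := by
    have := ((contDerivFc hr0 hr1 hρ0 hρ1).tendsto 0).comp htz
    simpa [Function.comp_def] using this
  have hdl1 : Tendsto (fun n : ℕ => deriv (Fc r ρ) ((r^(n+1) * t₀ : ℝ):ℂ)) atTop
      (nhds (deriv (Fc r ρ) 0)) := hdl.comp (tendsto_add_atTop_nat 1)
  have hWl : Tendsto W atTop (nhds ((1:ℂ) * ((r:ℂ) * deriv (Fc r ρ) 0)
      - deriv (Fc r ρ) 0 * 1)) := by
    exact (hfl.mul (hdl1.const_mul _)).sub (hdl.mul hfl1)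
  have hρn : Tendsto (fun N : ℕ => -((ρ:ℂ)^N)) atTop (nhds 0) := by
    have : Tendsto (fun N : ℕ => (ρ:ℂ)^N) atTop (nhds 0) := by
      apply tendsto_pow_atTop_nhds_zero_of_norm_lt_one
      rw [Complex.norm_real, Real.norm_eq_abs, abs_of_pos hρ0]
      exact hρ1
    simpa using this.neg
  have hrS : Tendsto (fun N => (r:ℂ) * S N) atTop (nhds 0) := by
    have := hρn.mul hWl
    simp only [zero_mul] at this
    exact Tendsto.congr (fun N => (hSW N).symm) this
  have hS0 : Tendsto S atTop (nhds 0) := by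
    have h2 := hrS.const_mul ((r:ℂ)⁻¹)
    simp only [mul_zero] at h2
    apply Tendsto.congr ?_ h2
    intro N
    rw [← mul_assoc, inv_mul_cancel₀ (by exact_mod_cast hr0.ne'), one_mul]
  -- real parts
  set g : ℕ → ℝ := fun n => Fr r ρ (r^n * t₀) with hgdef
  have hfg : ∀ n, f n = ((g n : ℝ):ℂ) := fun n => Fc_ofReal _
  have hSreal : ∀ N, S N = ((∑ n ∈ Finset.range N, ρ^n * (g (n+1))^2 : ℝ):ℂ) := by
    intro N
    rw [hSdef, Complex.ofReal_sum]
    apply Finset.sum_congr rfl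
    intro n _
    rw [hfg (n+1)]
    push_cast
    ring
  set Sr : ℕ → ℝ := fun N => ∑ n ∈ Finset.range N, ρ^n * (g (n+1))^2 with hSrdef
  have hSr0 : Tendsto Sr atTop (nhds 0) := by
    have := (Complex.continuous_re.tendsto 0).comp hS0
    simp only [Complex.zero_re] at this
    apply Tendsto.congr ?_ this
    intro N
    simp only [Function.comp_apply, hSreal N, Complex.ofReal_re, hSrdef]
  have hmono : Monotone Sr := by
    intro a b hab
    apply Finset.sum_le_sum_of_subset_of_nonneg (Finset.range_subset_range.mpr hab)
    intro n _ _
    positivity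
  have hSrle : ∀ N, Sr N ≤ 0 := fun N => hmono.ge_of_tendsto hSr0 N
  have hgzero : ∀ n : ℕ, g (n+1) = 0 := by
    intro n
    have h1 : ρ^n * (g (n+1))^2 ≤ Sr (n+1) := by
      have hnn : (0:ℝ) ≤ ∑ m ∈ Finset.range n, ρ^m * (g (m+1))^2 :=
        Finset.sum_nonneg fun m _ => by positivity
      simp only [hSrdef, Finset.sum_range_succ]
      linarith
    have h2 : (0:ℝ) ≤ ρ^n * (g (n+1))^2 := by positivity
    have h3 : ρ^n * (g (n+1))^2 = 0 := le_antisymm (le_trans h1 (hSrle (n+1))) h2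
    have hρn' : ρ^n ≠ 0 := pow_ne_zero _ hρ0.ne'
    have := mul_eq_zero.mp h3
    rcases this with h | h
    · exact absurd h hρn'
    · exact pow_eq_zero_iff (by norm_num) |>.mp h
  have hgl : Tendsto (fun n => g (n+1)) atTop (nhds 1) := by
    have h1 : Tendsto (fun n : ℕ => r^n * t₀) atTop (nhds 0) := by
      simpa using (tendsto_pow_atTop_nhds_zero_of_lt_one (le_of_lt hr0) hr1).mul_const t₀
    have h2 := ((Fr_cont hr0 hr1 hρ0 hρ1).tendsto 0).comp h1
    rw [Fr_zero] at h2
    exact (h2.comp (tendsto_add_atTop_nat 1))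
  have : (1:ℝ) = 0 := by
    apply tendsto_nhds_unique hgl
    simpa [hgzero] using tendsto_const_nhds (x := (0:ℝ))
  norm_num at this

lemma exists_zero_gt (hr0 : 0 < r) (hr1 : r < 1) (hρ0 : 0 < ρ) (hρ1 : ρ < 1)
    (R : ℝ) : ∃ t : ℝ, R < t ∧ Fr r ρ t = 0 := by
  by_contra hcon
  push_neg at hcon
  have hstar : ∀ t : ℝ, r * Fr r ρ t
      = (r + ρ - r^2*t) * Fr r ρ (r*t) - ρ * Fr r ρ (r^2*t) := by
    intro t
    have := star_id hr0 hr1 hρ0 hρ1 ((t:ℝ):ℂ)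
    have e1 : (r:ℂ) * ((t:ℝ):ℂ) = ((r*t : ℝ):ℂ) := by push_cast; ring
    have e2 : (r:ℂ)^2 * ((t:ℝ):ℂ) = ((r^2*t : ℝ):ℂ) := by push_cast; ring
    rw [e1, e2, Fc_ofReal, Fc_ofReal, Fc_ofReal] at this
    exact_mod_cast this
  set t₁ : ℝ := max R 0 + 1 with ht₁
  have ht₁R : R < t₁ := by
    have := le_max_left R 0
    simp only [ht₁]; linarith
  have hcont : Continuous (Fr r ρ) := Fr_cont hr0 hr1 hρ0 hρ1
  have hsign : (∀ t : ℝ, R < t → 0 < Fr r ρ t) ∨ (∀ t : ℝ, R < t → Fr r ρ t < 0) := by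
    rcases lt_or_gt_of_ne (hcon t₁ ht₁R) with hneg | hpos
    · right
      intro t ht
      rcases lt_or_gt_of_ne (hcon t ht) with h | h
      · exact h
      · exfalso
        have hIVT := intermediate_value_uIcc (a := t₁) (b := t)
          (f := Fr r ρ) (hcont.continuousOn)
        have h0mem : (0:ℝ) ∈ Set.uIcc (Fr r ρ t₁) (Fr r ρ t) :=
          Set.mem_uIcc.mpr (Or.inl ⟨hneg.le, h.le⟩)
        obtain ⟨c, hc, hc0⟩ := hIVT h0mem
        have hcR : R < c := by
          rcases Set.mem_uIcc.mp hc with ⟨h1, _⟩ | ⟨h1, _⟩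
          · exact lt_of_lt_of_le ht₁R h1
          · exact lt_of_lt_of_le ht h1
        exact hcon c hcR hc0
    · left
      intro t ht
      rcases lt_or_gt_of_ne (hcon t ht) with h | h
      · exfalso
        have hIVT := intermediate_value_uIcc (a := t₁) (b := t)
          (f := Fr r ρ) (hcont.continuousOn)
        have h0mem : (0:ℝ) ∈ Set.uIcc (Fr r ρ t₁) (Fr r ρ t) :=
          Set.mem_uIcc.mpr (Or.inr ⟨h.le, hpos.le⟩)
        obtain ⟨c, hc, hc0⟩ := hIVT h0mem
        have hcR : R < c := by
          rcases Set.mem_uIcc.mp hc with ⟨h1, _⟩ | ⟨h1, _⟩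
          · exact lt_of_lt_of_le ht₁R h1
          · exact lt_of_lt_of_le ht h1
        exact hcon c hcR hc0
      · exact h
  set z : ℝ := (max (R+1) (2 + r + ρ)) / r^2 with hzdef
  have hr2 : 0 < r^2 := by positivity
  have hz1 : R < r^2 * z := by
    rw [hzdef, mul_div_cancel₀ _ hr2.ne']
    have := le_max_left (R+1) (2+r+ρ)
    linarith
  have hzK : r + ρ - r^2 * z ≤ -1 := by
    rw [hzdef, mul_div_cancel₀ _ hr2.ne']
    have := le_max_right (R+1) (2+r+ρ)
    linarith
  have hzpos : 0 < z := by
    apply div_pos ?_ hr2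
    have := le_max_right (R+1) (2+r+ρ)
    linarith
  have hrz : R < r * z := by
    have hfac : 0 < (r*z)*(1-r) := mul_pos (mul_pos hr0 hzpos) (by linarith)
    nlinarith [hz1]
  have hzR : R < z := by
    have hfac : 0 < z * ((1-r)*(1+r)) := mul_pos hzpos (mul_pos (by linarith) (by linarith))
    nlinarith [hz1]
  rcases hsign with hs | hs
  · have h1 := hs z hzR
    have h2 := hs (r*z) hrz
    have h3 := hs (r^2*z) hz1
    have := hstar z
    nlinarith [mul_le_mul_of_nonneg_right hzK h2.le, mul_pos hρ0 h3, mul_pos hr0 h1]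
  · have h1 := hs z hzR
    have h2 := hs (r*z) hrz
    have h3 := hs (r^2*z) hz1
    have := hstar z
    nlinarith [mul_le_mul_of_nonneg_right hzK (by linarith : (0:ℝ) ≤ -Fr r ρ (r*z)),
      mul_pos hρ0 (by linarith : (0:ℝ) < -Fr r ρ (r^2*z)),
      mul_pos hr0 (by linarith : (0:ℝ) < -Fr r ρ z)]

lemma log_fac_bound {a x : ℝ} (ha1 : a < 1) (hx0 : 0 ≤ x) (hxa : x ≤ a) :
    -Real.log (1 - x) ≤ x / (1 - a) := by
  have h1 : 0 < 1 - x := by linarith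
  have h2 : 0 < 1 - a := by linarith
  have h3 : -Real.log (1-x) = Real.log (1-x)⁻¹ := by rw [Real.log_inv]
  rw [h3]
  have h4 := Real.log_le_sub_one_of_pos (inv_pos.mpr h1)
  have h5 : (1-x)⁻¹ - 1 = x / (1-x) := by field_simp; ring
  have h6 : x / (1-x) ≤ x / (1-a) := by
    apply div_le_div_of_nonneg_left hx0 h2
    linarith
  linarith

lemma qPochInf_ne (hr0 : 0 < r) (hr1 : r < 1) {a : ℝ} (ha0 : 0 < a) (ha1 : a < 1) :
    qPochInfC ((a:ℝ):ℂ) ((r:ℝ):ℂ) ≠ 0 := by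
  set t : ℕ → ℝ := fun j => 1 - a * r^j with htdef
  have htpos : ∀ j, 0 < t j := by
    intro j
    have h1 : r ^ j ≤ 1 := pow_le_one₀ hr0.le hr1.le
    simp only [htdef]
    nlinarith
  have htle : ∀ j, t j ≤ 1 := by
    intro j
    have : 0 ≤ a * r^j := by positivity
    simp only [htdef]; linarith
  have hlogsum : Summable (fun j => Real.log (t j)) := by
    have hneg : Summable (fun j => -Real.log (t j)) := by
      apply Summable.of_nonneg_of_le
      · intro j
        simpa using Real.log_nonpos (htpos j).le (htle j)
      · intro j
        have hxa : a * r^j ≤ a := by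
          have h1 : r ^ j ≤ 1 := pow_le_one₀ hr0.le hr1.le
          nlinarith
        exact log_fac_bound ha1 (by positivity) hxa
      · have := (summable_geometric_of_lt_one hr0.le hr1).mul_left (a / (1-a))
        apply this.congr
        intro j
        ring
    simpa using hneg.neg
  have hprod : HasProd t (∏' j, t j) := by
    have := (Real.multipliable_of_summable_log htpos hlogsum).hasProd
    exact this
  have hpos : 0 < ∏' j, t j := by
    have := Real.rexp_tsum_eq_tprod (f := t) htpos hlogsum
    rw [← this]
    exact Real.exp_pos _
  have hmapped : HasProd (fun j => ((t j : ℝ):ℂ)) (((∏' j, t j : ℝ):ℂ)) :=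
    hprod.map (Complex.ofRealHom : ℝ →+* ℂ).toMonoidHom Complex.continuous_ofReal
  have hfun : (fun j : ℕ => ((t j : ℝ):ℂ)) = fun j : ℕ => 1 - (a:ℂ) * (r:ℂ)^j := by
    funext j
    simp only [htdef]
    push_cast
    ring
  rw [hfun] at hmapped
  have : qPochInfC ((a:ℝ):ℂ) ((r:ℝ):ℂ) = (((∏' j, t j : ℝ):ℂ)) := by
    rw [qPochInfC]
    exact hmapped.tprod_eq
  rw [this]
  exact_mod_cast hpos.ne'

lemma qPochC_cast₁ (k : ℕ) : qPochC ((r:ℝ):ℂ) ((r:ℝ):ℂ) k = ((Ap r k : ℝ):ℂ) := by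
  rw [qPochC, Ap, Complex.ofReal_prod]
  apply Finset.prod_congr rfl
  intro j _
  push_cast [pow_succ]
  ring

lemma qPochC_cast₂ {a : ℝ} (k : ℕ) : qPochC ((a:ℝ):ℂ) ((r:ℝ):ℂ) k = ((Bp r a k : ℝ):ℂ) := by
  rw [qPochC, Bp, Complex.ofReal_prod]
  apply Finset.prod_congr rfl
  intro j _
  push_cast
  ring

lemma Jser_repr (hr0 : 0 < r) (hr1 : r < 1) {ν : ℝ} (hν : -1 < ν) (x : ℂ) :
    Jser ν r x = x ^ (ν:ℂ)
      * (qPochInfC ((r ^ (ν+1) : ℝ):ℂ) ((r:ℝ):ℂ) / qPochInfC ((r:ℝ):ℂ) ((r:ℝ):ℂ))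
      * Fc r (r ^ (ν+1)) (x^2) := by
  rw [Jser, Fc_eq]
  congr 1
  apply tsum_congr
  intro k
  rw [qPochC_cast₁, qPochC_cast₂, cc]
  push_cast
  rw [pow_mul]
  rw [div_mul_eq_mul_div]

lemma JHE_eq {ν : ℝ} (hν : -1 < ν) (q : ℝ) (x : ℂ) : JHE ν q x = Jser ν q x := by
  rw [JHE]
  split_ifs with h
  · have hspec := h.choose_spec
    have h0 : h.choose = 0 := by
      by_contra hne
      have h1 : (1:ℝ) ≤ (h.choose : ℝ) := by exact_mod_cast Nat.one_le_iff_ne_zero.mpr hne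
      rw [hspec] at hν; linarith
    have hν0 : ν = 0 := by rw [hspec, h0]; simp
    rw [h0, hν0]
    norm_num [Real.rpow_zero]
  · rfl

end Thm34


set_option maxHeartbeats 1000000 in
open Thm34 in
/-- Theorem 3.4: for `ν > -1` the Hahn–Exton q-Bessel function `J_ν(·;q²)` has a countably
infinite number of positive zeros, and each positive zero is simple. -/
theorem thm_3_4 (q : ℝ) (hq0 : 0 < q) (hq1 : q < 1) (ν : ℝ) (hν : -1 < ν) :
    {x : ℝ | 0 < x ∧ JHE ν (q ^ 2) (x : ℂ) = 0}.Countable ∧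
    {x : ℝ | 0 < x ∧ JHE ν (q ^ 2) (x : ℂ) = 0}.Infinite ∧
    (∀ a : ℝ, 0 < a → JHE ν (q ^ 2) (a : ℂ) = 0 →
      deriv (fun t : ℝ => JHE ν (q ^ 2) (t : ℂ)) a ≠ 0) := by
  have hQ0 : 0 < q^2 := by positivity
  have hQ1 : q^2 < 1 := by nlinarith
  have hP0 : 0 < (q^2) ^ (ν+1) := Real.rpow_pos_of_pos hQ0 _
  have hP1 : (q^2) ^ (ν+1) < 1 := Real.rpow_lt_one hQ0.le hQ1 (by linarith)
  set P : ℝ := (q^2) ^ (ν+1) with hPdef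
  set C : ℂ := qPochInfC ((P:ℝ):ℂ) ((q^2:ℝ):ℂ) / qPochInfC ((q^2:ℝ):ℂ) ((q^2:ℝ):ℂ) with hCdef
  have hC : C ≠ 0 :=
    div_ne_zero (qPochInf_ne hQ0 hQ1 hP0 hP1) (qPochInf_ne hQ0 hQ1 hQ0 hQ1)
  have hJ : ∀ x : ℂ, JHE ν (q^2) x = x ^ (ν:ℂ) * C * Fc (q^2) P (x^2) := by
    intro x
    rw [JHE_eq hν, Jser_repr hQ0 hQ1 hν]
  have hmem : ∀ x : ℝ, 0 < x → (JHE ν (q^2) (x:ℂ) = 0 ↔ Fr (q^2) P (x^2) = 0) := by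
    intro x hx
    rw [hJ]
    have hx2 : ((x:ℝ):ℂ)^2 = ((x^2 : ℝ):ℂ) := by push_cast; ring
    rw [hx2, Fc_ofReal]
    have hxν : ((x:ℝ):ℂ) ^ (ν:ℂ) ≠ 0 := by
      rw [Complex.cpow_def_of_ne_zero (by exact_mod_cast hx.ne')]
      exact Complex.exp_ne_zero _
    constructor
    · intro h
      rcases mul_eq_zero.mp h with h1 | h2
      · exact absurd h1 (mul_ne_zero hxν hC)
      · exact_mod_cast h2
    · intro h; rw [h]; simp
  set Sset := {x : ℝ | 0 < x ∧ JHE ν (q ^ 2) (x : ℂ) = 0} with hSsetdef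
  -- simplicity
  have hsimple : ∀ a : ℝ, 0 < a → JHE ν (q^2) (a:ℂ) = 0 →
      deriv (fun t : ℝ => JHE ν (q ^ 2) (t : ℂ)) a ≠ 0 := by
    intro a ha hzero
    have hFr0 : Fr (q^2) P (a^2) = 0 := (hmem a ha).mp hzero
    have hFc0 : Fc (q^2) P ((a^2 : ℝ):ℂ) = 0 := by
      rw [Fc_ofReal, hFr0]; simp
    have hder := Fc_simple hQ0 hQ1 hP0 hP1 (a^2) hFc0
    have hslit : ((a:ℝ):ℂ) ∈ Complex.slitPlane := by
      rw [Complex.mem_slitPlane_iff]; left; simpa using ha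
    have hcpow : HasDerivAt (fun z:ℂ => z ^ (ν:ℂ)) ((ν:ℂ) * ((a:ℝ):ℂ) ^ ((ν:ℂ)-1)) ((a:ℝ):ℂ) :=
      (Complex.hasStrictDerivAt_cpow_const hslit).hasDerivAt
    have hsq : HasDerivAt (fun z:ℂ => z^2) (2*((a:ℝ):ℂ)) ((a:ℝ):ℂ) := by
      simpa using hasDerivAt_pow 2 ((a:ℝ):ℂ)
    have hFcd : HasDerivAt (fun z:ℂ => Fc (q^2) P (z^2))
        (deriv (Fc (q^2) P) ((((a:ℝ):ℂ))^2) * (2*((a:ℝ):ℂ))) ((a:ℝ):ℂ) :=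
      (hderivFc hQ0 hQ1 hP0 hP1 ((((a:ℝ):ℂ))^2)).comp ((a:ℝ):ℂ) hsq
    have hprod := (hcpow.mul_const C).mul hFcd
    have hreal := hprod.comp_ofReal
    have hfeq : (fun t:ℝ => JHE ν (q^2) (t:ℂ))
        = (fun t:ℝ => ((t:ℝ):ℂ) ^ (ν:ℂ) * C * Fc (q^2) P (((t:ℝ):ℂ)^2)) := by
      funext t; rw [hJ]
    rw [hfeq, (show HasDerivAt (fun t:ℝ => ((t:ℝ):ℂ) ^ (ν:ℂ) * C * Fc (q^2) P (((t:ℝ):ℂ)^2)) _ a from hreal).deriv]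
    have hc2 : (((a:ℝ):ℂ))^2 = ((a^2 : ℝ):ℂ) := by push_cast; ring
    rw [hc2, hFc0]
    simp only [mul_zero, zero_add]
    have hxν : ((a:ℝ):ℂ) ^ (ν:ℂ) ≠ 0 := by
      rw [Complex.cpow_def_of_ne_zero (by exact_mod_cast ha.ne')]
      exact Complex.exp_ne_zero _
    have h2a : (2*((a:ℝ):ℂ)) ≠ 0 := by
      simp only [ne_eq, mul_eq_zero]
      push_neg
      exact ⟨by norm_num, by exact_mod_cast ha.ne'⟩
    exact mul_ne_zero (mul_ne_zero hxν hC) (mul_ne_zero hder h2a)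
  -- isolation of zeros
  have hiso : ∀ x ∈ Sset, ∃ ε, 0 < ε ∧ ∀ y, y ∈ Sset → |y - x| < ε → y = x := by
    intro x hx
    obtain ⟨hx0, hxz⟩ := hx
    have hFr0 : Fr (q^2) P (x^2) = 0 := (hmem x hx0).mp hxz
    have hFcx : Fc (q^2) P ((x^2 : ℝ):ℂ) = 0 := by rw [Fc_ofReal, hFr0]; simp
    have hder := Fc_simple hQ0 hQ1 hP0 hP1 (x^2) hFcx
    have hh : HasDerivAt (fun t:ℝ => Fc (q^2) P ((t:ℝ):ℂ))
        (deriv (Fc (q^2) P) ((x^2 : ℝ):ℂ)) (x^2) :=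
      (hderivFc hQ0 hQ1 hP0 hP1 ((x^2 : ℝ):ℂ)).comp_ofReal
    have hslope := hasDerivAt_iff_tendsto_slope.mp hh
    have hev : ∀ᶠ t in nhdsWithin (x^2) {(x^2)}ᶜ,
        slope (fun t:ℝ => Fc (q^2) P ((t:ℝ):ℂ)) (x^2) t ≠ 0 :=
      hslope.eventually_ne hder
    rw [eventually_nhdsWithin_iff, Metric.eventually_nhds_iff] at hev
    obtain ⟨δ, hδ0, hδ⟩ := hev
    refine ⟨min 1 (δ/(2*x+1)), lt_min one_pos (by positivity), ?_⟩
    intro y hy hylt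
    by_contra hyne
    obtain ⟨hy0, hyz⟩ := hy
    have hFry : Fr (q^2) P (y^2) = 0 := (hmem y hy0).mp hyz
    have hFcy : Fc (q^2) P ((y^2 : ℝ):ℂ) = 0 := by rw [Fc_ofReal, hFry]; simp
    have hne2 : y^2 ≠ x^2 := by
      intro heq
      have hfac : (y - x) * (y + x) = 0 := by linear_combination heq
      rcases mul_eq_zero.mp hfac with h | h
      · exact hyne (by linarith)
      · linarith
    have hd1 : |y - x| < 1 := lt_of_lt_of_le hylt (min_le_left _ _)
    have hd2 : |y - x| < δ/(2*x+1) := lt_of_lt_of_le hylt (min_le_right _ _)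
    have hyx : |y + x| ≤ 2*x + 1 := by
      rw [abs_le]; rw [abs_lt] at hd1; constructor <;> linarith
    have hdist : dist (y^2) (x^2) < δ := by
      rw [Real.dist_eq]
      have hfac : y^2 - x^2 = (y-x)*(y+x) := by ring
      rw [hfac, abs_mul]
      calc |y-x| * |y+x| ≤ |y-x| * (2*x+1) :=
            mul_le_mul_of_nonneg_left hyx (abs_nonneg _)
        _ < (δ/(2*x+1)) * (2*x+1) := by
            apply mul_lt_mul_of_pos_right hd2 (by linarith)
        _ = δ := by field_simp
    have hno := hδ hdist (by simpa using hne2)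
    apply hno
    simp only [slope, vsub_eq_sub]
    rw [hFcy, hFcx]
    simp
  -- countability
  have hcount : Sset.Countable := by
    choose! ε hεspec using hiso
    apply Set.PairwiseDisjoint.countable_of_isOpen
      (s := fun x : ℝ => Metric.ball x (ε x / 2))
    · intro x hx y hy hxy
      apply Set.disjoint_left.mpr
      intro z hzx hzy
      rw [Metric.mem_ball, Real.dist_eq] at hzx hzy
      exfalso
      rcases le_total (ε x) (ε y) with hle | hle
      · apply hxy
        have hd : |x - y| < ε y := by
          calc |x - y| ≤ |x - z| + |z - y| := abs_sub_le x z y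
            _ < ε x / 2 + ε y / 2 := add_lt_add (by rwa [abs_sub_comm x z]) hzy
            _ ≤ ε y := by linarith
        exact (hεspec y hy).2 x hx hd
      · apply hxy
        have hd : |y - x| < ε x := by
          calc |y - x| ≤ |y - z| + |z - x| := abs_sub_le y z x
            _ < ε y / 2 + ε x / 2 := add_lt_add (by rwa [abs_sub_comm y z]) hzx
            _ ≤ ε x := by linarith
        exact ((hεspec x hx).2 y hy hd).symm
    · intro x _
      exact Metric.isOpen_ball
    · intro x hx
      have := (hεspec x hx).1
      exact Metric.nonempty_ball.mpr (by linarith)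
  -- infinitude
  have hinf : Sset.Infinite := by
    have hunb : ∀ R : ℝ, ∃ x, x ∈ Sset ∧ R < x := by
      intro R
      obtain ⟨t, ht, htz⟩ := exists_zero_gt hQ0 hQ1 hP0 hP1 ((max R 0)^2)
      have ht0 : 0 < t := lt_of_le_of_lt (by positivity) ht
      have hsp : 0 < Real.sqrt t := Real.sqrt_pos.mpr ht0
      refine ⟨Real.sqrt t, ⟨hsp, ?_⟩, ?_⟩
      · apply (hmem _ hsp).mpr
        rw [Real.sq_sqrt ht0.le]
        exact htz
      · have h1 : Real.sqrt ((max R 0)^2) < Real.sqrt t := Real.sqrt_lt_sqrt (by positivity) ht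
        rw [Real.sqrt_sq (le_max_right R 0)] at h1
        exact lt_of_le_of_lt (le_max_left R 0) h1
    intro hfin
    obtain ⟨b, hb⟩ := hfin.bddAbove
    obtain ⟨x, hx, hbx⟩ := hunb b
    exact absurd (hb hx) (not_le.mpr hbx)
  exact ⟨hcount, hinf, hsimple⟩

end
end

section
/- Fix q with 0 < q < 1, let ν > −1 and let j_1^ν be the smallest positive zero of J_ν(·;q²). Then j_1^ν < q^{−1} √(1 + q^{2ν}). -/
open scoped BigOperators

noncomputable section

private def Ecoef (q p : ℝ) : ℕ → ℝ
  | 0 => 1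
  | k + 1 => Ecoef q p k *
      (-(q ^ (2 * k + 2)) / ((1 - q ^ (2 * k + 2)) * (1 - p * q ^ (2 * k + 2))))

variable {q p : ℝ}

private lemma den1_pos (hq0 : 0 < q) (hq1 : q < 1) (k : ℕ) : 0 < 1 - q ^ (2 * k + 2) := by
  have h1 : q ^ (2 * k + 2) ≤ q ^ 2 := pow_le_pow_of_le_one hq0.le hq1.le (by omega)
  have h2 : q ^ 2 < 1 := pow_lt_one₀ hq0.le hq1 (by norm_num)
  linarith

private lemma den2_pos (hq0 : 0 < q) (hq1 : q < 1) (hp0 : 0 < p) (hpq : p * q ^ 2 < 1)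
    (k : ℕ) : 0 < 1 - p * q ^ (2 * k + 2) := by
  have h1 : q ^ (2 * k + 2) ≤ q ^ 2 := pow_le_pow_of_le_one hq0.le hq1.le (by omega)
  nlinarith

private lemma Ecoef_ne_zero (hq0 : 0 < q) (hq1 : q < 1) (hp0 : 0 < p) (hpq : p * q ^ 2 < 1) :
    ∀ k, Ecoef q p k ≠ 0 := by
  intro k
  induction k with
  | zero => simp [Ecoef]
  | succ n ih =>
    have h1 := den1_pos hq0 hq1 n
    have h2 := den2_pos hq0 hq1 hp0 hpq n
    have hqk : q ^ (2 * n + 2) > 0 := pow_pos hq0 _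
    rw [Ecoef]
    refine mul_ne_zero ih (div_ne_zero ?_ ?_)
    · exact neg_ne_zero.mpr (ne_of_gt hqk)
    · positivity

private lemma prodA_pos (hq0 : 0 < q) (hq1 : q < 1) (k : ℕ) :
    0 < ∏ j ∈ Finset.range k, (1 - q ^ 2 * (q ^ 2) ^ j) := by
  apply Finset.prod_pos
  intro j _
  have h2 : q ^ 2 < 1 := pow_lt_one₀ hq0.le hq1 (by norm_num)
  have h3 : (q ^ 2) ^ j ≤ 1 := pow_le_one₀ (by positivity) h2.le
  nlinarith [sq_nonneg q, pow_pos (pow_pos hq0 2) j]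

private lemma prodB_pos (hq0 : 0 < q) (hq1 : q < 1) (hp0 : 0 < p) (hpq : p * q ^ 2 < 1)
    (k : ℕ) : 0 < ∏ j ∈ Finset.range k, (1 - p * q ^ 2 * (q ^ 2) ^ j) := by
  apply Finset.prod_pos
  intro j _
  have h2 : q ^ 2 < 1 := pow_lt_one₀ hq0.le hq1 (by norm_num)
  have h3 : (q ^ 2) ^ j ≤ 1 := pow_le_one₀ (by positivity) h2.le
  nlinarith [pow_pos (pow_pos hq0 2) j]

private lemma Ecoef_spec (hq0 : 0 < q) (hq1 : q < 1) (hp0 : 0 < p) (hpq : p * q ^ 2 < 1) :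
    ∀ k, Ecoef q p k *
      ((∏ j ∈ Finset.range k, (1 - q ^ 2 * (q ^ 2) ^ j)) *
        (∏ j ∈ Finset.range k, (1 - p * q ^ 2 * (q ^ 2) ^ j)))
      = (-1 : ℝ) ^ k * (q ^ 2) ^ (k * (k + 1) / 2) := by
  intro k
  induction k with
  | zero => simp [Ecoef]
  | succ n ih =>
    have h1 := den1_pos hq0 hq1 n
    have h2 := den2_pos hq0 hq1 hp0 hpq n
    have e1 : q ^ 2 * (q ^ 2) ^ n = q ^ (2 * n + 2) := by
      rw [← pow_mul, ← pow_add]; ring_nf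
    obtain ⟨m, hm⟩ : 2 ∣ n * (n + 1) := (Nat.even_mul_succ_self n).two_dvd
    have hr : (n + 1) * ((n + 1) + 1) = n * (n + 1) + 2 * (n + 1) := by ring
    rw [Finset.prod_range_succ, Finset.prod_range_succ, Ecoef,
      show (n+1) * ((n+1) + 1) / 2 = n * (n + 1) / 2 + (n + 1) by omega]
    have hD : (1 - q ^ 2 * (q ^ 2) ^ n) * (1 - p * q ^ 2 * (q ^ 2) ^ n)
        = (1 - q ^ (2 * n + 2)) * (1 - p * q ^ (2 * n + 2)) := by rw [← e1]; ring
    calc _ = (-(q ^ (2 * n + 2)) / ((1 - q ^ (2 * n + 2)) * (1 - p * q ^ (2 * n + 2)))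
            * ((1 - q ^ 2 * (q ^ 2) ^ n) * (1 - p * q ^ 2 * (q ^ 2) ^ n)))
          * (Ecoef q p n * ((∏ j ∈ Finset.range n, (1 - q ^ 2 * (q ^ 2) ^ j)) *
            (∏ j ∈ Finset.range n, (1 - p * q ^ 2 * (q ^ 2) ^ j)))) := by ring
      _ = _ := by
        rw [hD, div_mul_cancel₀ _ (mul_pos h1 h2).ne', ih, pow_add]; ring

/-- The real series term in `Jser` form equals the `Ecoef` form. -/
private lemma term_eq (hq0 : 0 < q) (hq1 : q < 1) (hp0 : 0 < p) (hpq : p * q ^ 2 < 1)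
    (k : ℕ) (x : ℝ) :
    ((-1 : ℝ) ^ k * (q ^ 2) ^ (k * (k + 1) / 2) * x ^ (2 * k)) /
      ((∏ j ∈ Finset.range k, (1 - q ^ 2 * (q ^ 2) ^ j)) *
        (∏ j ∈ Finset.range k, (1 - p * q ^ 2 * (q ^ 2) ^ j)))
      = Ecoef q p k * x ^ (2 * k) := by
  have hA := prodA_pos hq0 hq1 k
  have hB := prodB_pos hq0 hq1 hp0 hpq k
  rw [div_eq_iff (ne_of_gt (mul_pos hA hB))]
  linear_combination (-(x ^ (2 * k))) * Ecoef_spec hq0 hq1 hp0 hpq k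

private lemma summable_E (hq0 : 0 < q) (hq1 : q < 1) (hp0 : 0 < p) (hpq : p * q ^ 2 < 1)
    (x : ℝ) : Summable (fun k => Ecoef q p k * x ^ (2 * k)) := by
  have hc : 0 < (1 - q ^ 2) * (1 - p * q ^ 2) := by
    have := den1_pos hq0 hq1 0
    have := den2_pos hq0 hq1 hp0 hpq 0
    simp only [Nat.mul_zero, Nat.zero_add] at *
    nlinarith
  apply summable_of_ratio_norm_eventually_le (r := 1/2) (by norm_num)
  have htend : Filter.Tendsto (fun k : ℕ => q ^ (2 * k + 2) * (x ^ 2 / ((1 - q ^ 2) * (1 - p * q ^ 2))))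
      Filter.atTop (nhds 0) := by
    have h0 : Filter.Tendsto (fun k : ℕ => (q ^ 2) ^ k) Filter.atTop (nhds 0) :=
      tendsto_pow_atTop_nhds_zero_of_lt_one (by positivity) (pow_lt_one₀ hq0.le hq1 (by norm_num))
    have : (fun k : ℕ => q ^ (2 * k + 2) * (x ^ 2 / ((1 - q ^ 2) * (1 - p * q ^ 2))))
        = fun k : ℕ => (q ^ 2) ^ k * (q ^ 2 * (x ^ 2 / ((1 - q ^ 2) * (1 - p * q ^ 2)))) := by
      funext k; rw [pow_add, ← pow_mul]; ring
    rw [this]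
    simpa using h0.mul_const _
  filter_upwards [htend.eventually_lt_const (by norm_num : (0:ℝ) < 1/2)] with k hk
  have h1 := den1_pos hq0 hq1 (q := q) k
  have h2 := den2_pos hq0 hq1 hp0 hpq k
  have hQ : 0 < q ^ (2 * k + 2) := pow_pos hq0 _
  have hmono : q ^ (2 * k + 2) ≤ q ^ 2 := pow_le_pow_of_le_one hq0.le hq1.le (by omega)
  have hden : (1 - q ^ 2) * (1 - p * q ^ 2) ≤ (1 - q ^ (2 * k + 2)) * (1 - p * q ^ (2 * k + 2)) := by
    have hq2le : q ^ 2 ≤ 1 := by nlinarith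
    have h5 : p * q ^ (2 * k + 2) ≤ p * q ^ 2 := by nlinarith
    have h6 : (0:ℝ) ≤ (1 + p) - p * (q ^ 2 + q ^ (2 * k + 2)) := by nlinarith
    nlinarith [mul_nonneg (sub_nonneg.2 hmono) h6]
  have hEabs : |Ecoef q p (k + 1) * x ^ (2 * (k + 1))|
      = |Ecoef q p k * x ^ (2 * k)| * (q ^ (2 * k + 2) * x ^ 2 / ((1 - q ^ (2*k+2)) * (1 - p * q ^ (2*k+2)))) := by
    rw [Ecoef]
    rw [abs_mul, abs_mul, abs_mul, abs_div, abs_neg, abs_of_pos hQ,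
      abs_of_pos (by positivity : (0:ℝ) < (1 - q ^ (2*k+2)) * (1 - p * q ^ (2*k+2)))]
    rw [show 2 * (k + 1) = 2 * k + 2 by ring, abs_pow, abs_pow]
    rw [show |x| ^ (2*k+2) = |x| ^ (2*k) * x^2 by rw [pow_add, sq_abs]]
    ring
  rw [Real.norm_eq_abs, Real.norm_eq_abs, hEabs]
  have hle : q ^ (2 * k + 2) * x ^ 2 / ((1 - q ^ (2*k+2)) * (1 - p * q ^ (2*k+2)))
      ≤ q ^ (2 * k + 2) * (x ^ 2 / ((1 - q ^ 2) * (1 - p * q ^ 2))) := by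
    have hnum : 0 ≤ q ^ (2 * k + 2) * x ^ 2 := by positivity
    have h := div_le_div_of_nonneg_left hnum hc hden
    calc q ^ (2 * k + 2) * x ^ 2 / ((1 - q ^ (2*k+2)) * (1 - p * q ^ (2*k+2)))
        ≤ q ^ (2 * k + 2) * x ^ 2 / ((1 - q ^ 2) * (1 - p * q ^ 2)) := by
          exact div_le_div_of_nonneg_left hnum hc hden
      _ = q ^ (2 * k + 2) * (x ^ 2 / ((1 - q ^ 2) * (1 - p * q ^ 2))) := by ring
  calc |Ecoef q p k * x ^ (2 * k)| * (q ^ (2 * k + 2) * x ^ 2 / ((1 - q ^ (2*k+2)) * (1 - p * q ^ (2*k+2))))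
      ≤ |Ecoef q p k * x ^ (2 * k)| * (q ^ (2 * k + 2) * (x ^ 2 / ((1 - q ^ 2) * (1 - p * q ^ 2)))) := by
        exact mul_le_mul_of_nonneg_left hle (abs_nonneg _)
    _ ≤ 1/2 * |Ecoef q p k * x ^ (2 * k)| := by
        rw [mul_comm]
        exact mul_le_mul_of_nonneg_right hk.le (abs_nonneg _)

private lemma telescope (hq0 : 0 < q) (hq1 : q < 1) (hp0 : 0 < p) (hpq : p * q ^ 2 < 1)
    {X : ℝ} (hX : q ^ 2 * X ^ 2 = 1 + p) :
    ∀ n, ∑ k ∈ Finset.range (n + 1),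
        (Ecoef q p k * X ^ (2 * k) + p * (Ecoef q p k * (q ^ 2 * X) ^ (2 * k)))
      = (1 + p) * (Ecoef q p n * (q * X) ^ (2 * n)) := by
  intro n
  induction n with
  | zero =>
    rw [show (0:ℕ) + 1 = 1 from rfl, Finset.sum_range_one,
      show Ecoef q p 0 = 1 from rfl]
    norm_num
  | succ n ih =>
    rw [Finset.sum_range_succ, ih]
    have h1 := den1_pos hq0 hq1 (q := q) n
    have h2 := den2_pos hq0 hq1 hp0 hpq n
    have hQpos : (0:ℝ) < q ^ (2 * n + 2) := pow_pos hq0 _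
    -- rewrite all the powers
    have e1 : X ^ (2 * (n + 1)) = (X ^ 2) ^ (n + 1) := by rw [← pow_mul]
    have e2 : (q ^ 2 * X) ^ (2 * (n + 1)) = ((q^2*X) ^ 2) ^ (n + 1) := by rw [← pow_mul]
    have e3 : (q * X) ^ (2 * (n + 1)) = ((q*X) ^ 2) ^ (n + 1) := by rw [← pow_mul]
    have e4 : (q * X) ^ (2 * n) = ((q*X) ^ 2) ^ n := by rw [← pow_mul]
    have h5 : (q*X)^2 = 1 + p := by rw [mul_pow]; exact hX
    have h6 : (q^2*X)^2 = q^2 * (1 + p) := by rw [mul_pow, ← hX]; ring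
    have hQ : q ^ (2 * n + 2) = (q ^ 2) ^ (n + 1) := by rw [← pow_mul]; ring_nf
    have hab : (q ^ 2) ^ (n + 1) * (X ^ 2) ^ (n + 1) = (1 + p) ^ (n + 1) := by
      rw [← mul_pow, hX]
    have e7 : (q ^ 2 * (1 + p)) ^ (n + 1) = (q ^ 2) ^ (n + 1) * (1 + p) ^ (n + 1) := mul_pow _ _ _
    rw [e1, e2, e3, e4, h5, h6, e7, Ecoef, hQ]
    have hane : ((q:ℝ) ^ 2) ^ (n + 1) ≠ 0 := by positivity
    refine mul_left_cancel₀ hane ?_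
    have hE : Ecoef q p n * (-(q ^ (2 * n + 2)) / ((1 - q ^ (2 * n + 2)) * (1 - p * q ^ (2 * n + 2))))
        * ((1 - (q ^ 2) ^ (n+1)) * (1 - p * (q ^ 2) ^ (n+1)))
        = Ecoef q p n * (-((q ^ 2) ^ (n+1))) := by
      have hD : ((1 - (q ^ 2) ^ (n+1)) * (1 - p * (q ^ 2) ^ (n+1))) ≠ 0 := by
        rw [← hQ]; exact (mul_pos h1 h2).ne'
      rw [hQ]
      field_simp
      have hD' : (1 - (q ^ 2) ^ (n + 1)) * (1 - (q ^ 2) ^ (n + 1) * p) ≠ 0 := by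
        rw [mul_comm _ p]; exact hD
      rw [neg_inj, div_eq_iff hD']; ring
    linear_combination (Ecoef q p n * (-(q ^ (2 * n + 2)) / ((1 - q ^ (2 * n + 2)) * (1 - p * q ^ (2 * n + 2))))) * hab + ((1+p)^(n+1)) * hE

private lemma key_identity (hq0 : 0 < q) (hq1 : q < 1) (hp0 : 0 < p) (hpq : p * q ^ 2 < 1)
    {X : ℝ} (hX : q ^ 2 * X ^ 2 = 1 + p) :
    (∑' k, Ecoef q p k * X ^ (2 * k)) + p * (∑' k, Ecoef q p k * (q ^ 2 * X) ^ (2 * k)) = 0 := by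
  have s1 := summable_E hq0 hq1 hp0 hpq X
  have s2 := (summable_E hq0 hq1 hp0 hpq (q ^ 2 * X)).mul_left p
  rw [← tsum_mul_left, ← s1.tsum_add s2]
  set A := fun k => Ecoef q p k * X ^ (2 * k) + p * (Ecoef q p k * (q ^ 2 * X) ^ (2 * k)) with hA
  have sA : Summable A := s1.add s2
  have h1 := sA.hasSum.tendsto_sum_nat
  have h2 : Filter.Tendsto (fun n => ∑ k ∈ Finset.range (n + 1), A k) Filter.atTop (nhds (∑' k, A k)) :=
    (Filter.tendsto_add_atTop_iff_nat 1).2 h1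
  have h3 : (fun n => ∑ k ∈ Finset.range (n + 1), A k)
      = fun n => (1 + p) * (Ecoef q p n * (q * X) ^ (2 * n)) :=
    funext (telescope hq0 hq1 hp0 hpq hX)
  rw [h3] at h2
  have h4 : Filter.Tendsto (fun n => (1 + p) * (Ecoef q p n * (q * X) ^ (2 * n)))
      Filter.atTop (nhds 0) := by
    have := (summable_E hq0 hq1 hp0 hpq (q * X)).tendsto_atTop_zero.const_mul (1 + p)
    simpa using this
  exact tendsto_nhds_unique h2 h4

private lemma continuousOn_S (hq0 : 0 < q) (hq1 : q < 1) (hp0 : 0 < p) (hpq : p * q ^ 2 < 1)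
    (R : ℝ) (hR : 0 ≤ R) :
    ContinuousOn (fun x : ℝ => ∑' k, Ecoef q p k * x ^ (2 * k)) (Set.Icc (-R) R) := by
  apply continuousOn_tsum (u := fun k => |Ecoef q p k| * R ^ (2 * k))
  · exact fun i => ((continuous_const.mul ((continuous_id.pow _))).continuousOn)
  · have := (summable_E hq0 hq1 hp0 hpq R).abs
    refine this.congr fun k => ?_
    rw [abs_mul, abs_pow, abs_of_nonneg hR]
  · intro n x hx
    rw [Real.norm_eq_abs, abs_mul, abs_pow]
    have hxR : |x| ≤ R := abs_le.2 ⟨hx.1, hx.2⟩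
    exact mul_le_mul_of_nonneg_left (pow_le_pow_left₀ (abs_nonneg _) hxR _) (abs_nonneg _)

/-- `JHE` agrees with `Jser` for orders `ν > -1`. -/
private lemma JHE_eq_Jser (Q : ℝ) {ν : ℝ} (hν : -1 < ν) (x : ℂ) : JHE ν Q x = Jser ν Q x := by
  rw [JHE]
  split_ifs with h
  · have hs := h.choose_spec
    have h1 : (h.choose : ℝ) < 1 := by linarith
    have hc : h.choose = 0 := by exact_mod_cast Nat.lt_one_iff.mp (by exact_mod_cast h1)
    have hν0 : ν = 0 := by rw [hs, hc]; simp
    rw [hc, hν0]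
    norm_num
  · rfl

/-- Casting the series part of `Jser` to the real `Ecoef` series. -/
private lemma tsum_cast (hq0 : 0 < q) (hq1 : q < 1) (hp0 : 0 < p) (hpq : p * q ^ 2 < 1)
    {ν : ℝ} (hP : ((q ^ 2 : ℝ) ^ (ν + 1) : ℝ) = p * q ^ 2) (x : ℝ) :
    (∑' k : ℕ, ((-1 : ℂ) ^ k * ((q ^ 2 : ℝ) : ℂ) ^ (k * (k + 1) / 2) * ((x : ℂ)) ^ (2 * k)) /
        (qPochC ((q ^ 2 : ℝ) : ℂ) ((q ^ 2 : ℝ) : ℂ) k *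
          qPochC (((q ^ 2 : ℝ) ^ (ν + 1) : ℝ) : ℂ) ((q ^ 2 : ℝ) : ℂ) k))
      = ((∑' k : ℕ, Ecoef q p k * x ^ (2 * k) : ℝ) : ℂ) := by
  rw [Complex.ofReal_tsum]
  apply tsum_congr
  intro k
  have cast1 : qPochC ((q ^ 2 : ℝ) : ℂ) ((q ^ 2 : ℝ) : ℂ) k
      = ((∏ j ∈ Finset.range k, (1 - q ^ 2 * (q ^ 2) ^ j) : ℝ) : ℂ) := by
    rw [qPochC, Complex.ofReal_prod]
    apply Finset.prod_congr rfl
    intro j _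
    push_cast
    ring
  have cast2 : qPochC (((q ^ 2 : ℝ) ^ (ν + 1) : ℝ) : ℂ) ((q ^ 2 : ℝ) : ℂ) k
      = ((∏ j ∈ Finset.range k, (1 - p * q ^ 2 * (q ^ 2) ^ j) : ℝ) : ℂ) := by
    rw [qPochC, Complex.ofReal_prod]
    apply Finset.prod_congr rfl
    intro j _
    rw [hP]
    push_cast
    ring
  rw [cast1, cast2, ← term_eq hq0 hq1 hp0 hpq k x]
  push_cast
  ring

/-- The smallest positive zero `j_1^ν` of `J_ν(·;q²)`, `ν > -1`, satisfies
`j_1^ν < q⁻¹ √(1+q^{2ν})`. -/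
theorem first_zero_bound (q : ℝ) (hq0 : 0 < q) (hq1 : q < 1) (ν : ℝ) (hν : -1 < ν)
    (j1 : ℝ) (hj1pos : 0 < j1) (hj1zero : JHE ν (q ^ 2) (j1 : ℂ) = 0)
    (hj1min : ∀ x : ℝ, 0 < x → JHE ν (q ^ 2) (x : ℂ) = 0 → j1 ≤ x) :
    j1 < q⁻¹ * Real.sqrt (1 + q ^ (2 * ν)) := by
  set p : ℝ := q ^ (2 * ν) with hp
  have hp0 : 0 < p := Real.rpow_pos_of_pos hq0 _
  have hq20 : (0:ℝ) < q ^ 2 := by positivity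
  have hq21 : q ^ 2 < 1 := pow_lt_one₀ hq0.le hq1 (by norm_num)
  have hP : ((q ^ 2 : ℝ) ^ (ν + 1) : ℝ) = p * q ^ 2 := by
    rw [← Real.rpow_natCast q 2, ← Real.rpow_mul hq0.le]
    rw [show (((2:ℕ):ℝ)) * (ν + 1) = 2 * ν + 2 by push_cast; ring]
    rw [Real.rpow_add hq0, hp]
    norm_num [Real.rpow_natCast]
  have hpq : p * q ^ 2 < 1 := by
    rw [← hP]
    exact Real.rpow_lt_one hq20.le hq21 (by linarith)
  set X : ℝ := q⁻¹ * Real.sqrt (1 + p) with hXdef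
  have hsp : (0:ℝ) < 1 + p := by linarith
  have hXpos : 0 < X := mul_pos (inv_pos.2 hq0) (Real.sqrt_pos.2 hsp)
  have hX : q ^ 2 * X ^ 2 = 1 + p := by
    rw [hXdef, mul_pow, Real.sq_sqrt hsp.le]
    field_simp
  -- the real series
  set S : ℝ → ℝ := fun x => ∑' k : ℕ, Ecoef q p k * x ^ (2 * k) with hSdef
  -- JHE in terms of S
  have hJS : ∀ x : ℝ, JHE ν (q ^ 2) (x : ℂ)
      = (x : ℂ) ^ (ν : ℂ) *
        (qPochInfC (((q ^ 2 : ℝ) ^ (ν + 1) : ℝ) : ℂ) ((q ^ 2 : ℝ) : ℂ) /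
          qPochInfC ((q ^ 2 : ℝ) : ℂ) ((q ^ 2 : ℝ) : ℂ)) * ((S x : ℝ) : ℂ) := by
    intro x
    rw [JHE_eq_Jser (q ^ 2) hν, Jser, tsum_cast hq0 hq1 hp0 hpq hP x]
  have hzero : ∀ x : ℝ, S x = 0 → JHE ν (q ^ 2) (x : ℂ) = 0 := by
    intro x hx
    rw [hJS x, hx]
    simp
  have hq2X : q ^ 2 * X < X := by nlinarith
  have hq2Xpos : 0 < q ^ 2 * X := by positivity
  -- key identity
  have hid : S X = -(p * S (q ^ 2 * X)) := by
    have := key_identity hq0 hq1 hp0 hpq hX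
    rw [hSdef]
    dsimp only
    linarith [this]
  by_cases hS2 : S (q ^ 2 * X) = 0
  · have h0 := hzero _ hS2
    have := hj1min (q ^ 2 * X) hq2Xpos h0
    linarith
  · -- sign change on [q²X, X]
    have hSX : S X ≠ 0 := by
      rw [hid]
      intro h
      exact hS2 (by nlinarith [neg_eq_zero.mp h])
    have hsub : Set.Icc (q ^ 2 * X) X ⊆ Set.Icc (-X) X :=
      Set.Icc_subset_Icc (by linarith) le_rfl
    have hcont : ContinuousOn S (Set.Icc (q ^ 2 * X) X) :=
      (continuousOn_S hq0 hq1 hp0 hpq X hXpos.le).mono hsub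
    have hab : q ^ 2 * X ≤ X := hq2X.le
    have hc : ∃ c ∈ Set.Icc (q ^ 2 * X) X, S c = 0 := by
      rcases lt_or_gt_of_ne hS2 with hneg | hpos
      · have hSXpos : 0 < S X := by rw [hid]; nlinarith
        have : (0:ℝ) ∈ Set.Icc (S (q ^ 2 * X)) (S X) := ⟨hneg.le, hSXpos.le⟩
        obtain ⟨c, hc1, hc2⟩ := intermediate_value_Icc hab hcont this
        exact ⟨c, hc1, hc2⟩
      · have hSXneg : S X < 0 := by rw [hid]; nlinarith
        have : (0:ℝ) ∈ Set.Icc (S X) (S (q ^ 2 * X)) := ⟨hSXneg.le, hpos.le⟩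
        obtain ⟨c, hc1, hc2⟩ := intermediate_value_Icc' hab hcont this
        exact ⟨c, hc1, hc2⟩
    obtain ⟨c, ⟨hc1, hc2⟩, hc0⟩ := hc
    have hcX : c < X := lt_of_le_of_ne hc2 (fun h => hSX (h ▸ hc0))
    have hcpos : 0 < c := lt_of_lt_of_le hq2Xpos hc1
    have := hj1min c hcpos (hzero c hc0)
    linarith

end
end

section
/- Fix q with 0 < q < 1 and let ν ∈ ℝ. The Hahn–Exton q-Bessel functions J_ν(·;q²) and J_{ν+1}(·;q²) have no common zeros except possibly 0; that is, there is no x ∈ ℂ∖{0} with J_ν(x;q²) = 0 and J_{ν+1}(x;q²) = 0. -/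
open scoped BigOperators

noncomputable section

namespace HE

lemma tri (k : ℕ) : (k+1)*(k+2)/2 = k*(k+1)/2 + (k+1) := by
  have h1 : k*(k+1) = 2*(k*(k+1)/2) := (Nat.two_mul_div_two_of_even (Nat.even_mul_succ_self k)).symm
  have h2 : (k+1)*(k+2) = k*(k+1) + 2*(k+1) := by ring
  omega

lemma qPochC_succ (a q : ℂ) (k : ℕ) : qPochC a q (k+1) = qPochC a q k * (1 - a*q^k) :=
  Finset.prod_range_succ _ _

lemma qPochC_succ' (a q : ℂ) (k : ℕ) : qPochC a q (k+1) = (1 - a) * qPochC (a*q) q k := by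
  rw [qPochC, Finset.prod_range_succ']
  simp only [pow_zero, mul_one, pow_succ]
  rw [qPochC, mul_comm]
  congr 1
  exact Finset.prod_congr rfl fun j _ => by ring_nf

lemma qPochC_key (a q : ℂ) (k : ℕ) :
    qPochC a q k * (1 - a*q^k) = (1 - a) * qPochC (a*q) q k := by
  rw [← qPochC_succ, qPochC_succ']

lemma qPochC_ne_zero {a p : ℝ} (ha1 : ∀ j : ℕ, a * p^j ≠ 1) (k : ℕ) :
    qPochC (a:ℂ) (p:ℂ) k ≠ 0 := by
  rw [qPochC]
  refine Finset.prod_ne_zero_iff.2 fun j _ => ?_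
  have : ((1 - a * p ^ j : ℝ) : ℂ) ≠ 0 := by
    rw [Complex.ofReal_ne_zero]
    intro h
    exact ha1 j (by linarith)
  simpa using this

/-- The `k`-th term of the Hahn-Exton series with Pochhammer parameter `a`. -/
def trm (p a : ℝ) (x : ℂ) (k : ℕ) : ℂ :=
  ((-1 : ℂ) ^ k * (p : ℂ) ^ (k * (k + 1) / 2) * x ^ (2 * k)) /
    (qPochC (p : ℂ) (p : ℂ) k * qPochC (a : ℂ) (p : ℂ) k)

lemma trm_zero (p a : ℝ) (x : ℂ) : trm p a x 0 = 1 := by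
  simp [trm, qPochC]

section rel
variable {p s a : ℝ} (hp0 : 0 < p) (hp1 : p < 1) (hsp : s^2 = p)
  (hp : ∀ j : ℕ, p * p^j ≠ 1) (ha1 : ∀ j : ℕ, a * p^j ≠ 1)

include hp0 hp1 in
lemma hpne : ∀ j : ℕ, p * p^j ≠ 1 := fun j h => by
  nlinarith [pow_le_one₀ hp0.le hp1.le (n := j), pow_nonneg hp0.le j]

include hsp in
lemma sx_pow (x : ℂ) (k : ℕ) : ((s:ℂ) * x) ^ (2*k) = (p:ℂ)^k * x^(2*k) := by
  rw [mul_pow, two_mul, pow_add]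
  have h : ((s:ℂ))^k * (s:ℂ)^k = ((p:ℝ):ℂ)^k := by
    rw [← mul_pow]; norm_cast; rw [← hsp]; ring
  rw [← two_mul, two_mul, pow_add, h]

include hp ha1 in
/-- per-term relation B -/
lemma relB_term (x : ℂ) (k : ℕ) (hsp : s^2 = p) :
    trm p a x k - trm p (a*p) x k
      = ((a:ℂ)/(1-(a:ℂ))) * (trm p (a*p) x k - trm p (a*p) ((s:ℂ)*x) k) := by
  have hP := qPochC_ne_zero hp k
  have hQa := qPochC_ne_zero ha1 k
  have ha1' : ∀ j : ℕ, (a*p) * p^j ≠ 1 := fun j => by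
    rw [mul_assoc, ← pow_succ']; exact ha1 (j+1)
  have hQap := qPochC_ne_zero ha1' k
  have hane : a ≠ 1 := by simpa using ha1 0
  have hone : (1:ℂ) - (a:ℂ) ≠ 0 := by
    rw [sub_ne_zero]
    intro h
    exact hane (by exact_mod_cast h.symm)
  have hak : (1:ℂ) - (a:ℂ)*(p:ℂ)^k ≠ 0 := by
    have h0 : ((1 - a*p^k : ℝ):ℂ) ≠ 0 := by
      rw [Complex.ofReal_ne_zero]; intro h; exact ha1 k (by linarith)
    push_cast at h0; simpa using h0
  have hcast : ((a*p : ℝ):ℂ) = (a:ℂ)*(p:ℂ) := by push_cast; rfl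
  have key := qPochC_key (a:ℂ) (p:ℂ) k
  have hv : qPochC ((a:ℂ)*(p:ℂ)) (p:ℂ) k
      = qPochC (a:ℂ) (p:ℂ) k * (1-(a:ℂ)*(p:ℂ)^k) / (1-(a:ℂ)) := by
    rw [eq_div_iff hone]; linear_combination -key
  simp only [trm, hcast, hv, sx_pow hsp]
  field_simp [hP, hQa, hone, hak]
  ring

include hp ha1 hsp in
/-- per-term relation A (index shifted) -/
lemma relA_term (x : ℂ) (j : ℕ) :
    trm p a x (j+1) - trm p a ((s:ℂ)*x) (j+1)
      = -((p:ℂ)*x^2/(1-(a:ℂ))) * trm p (a*p) ((s:ℂ)*x) j := by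
  have hane : a ≠ 1 := by simpa using ha1 0
  have hone : (1:ℂ) - (a:ℂ) ≠ 0 := by
    rw [sub_ne_zero]; intro h; exact hane (by exact_mod_cast h.symm)
  have hP := qPochC_ne_zero hp j
  have ha1' : ∀ i : ℕ, (a*p) * p^i ≠ 1 := fun i => by
    rw [mul_assoc, ← pow_succ']; exact ha1 (i+1)
  have hQap := qPochC_ne_zero ha1' j
  have hpk : (1:ℂ) - (p:ℂ)*(p:ℂ)^j ≠ 0 := by
    have h0 : ((1 - p*p^j : ℝ):ℂ) ≠ 0 := by
      rw [Complex.ofReal_ne_zero]; intro h; exact hp j (by linarith)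
    push_cast at h0; simpa using h0
  have hcast : ((a*p : ℝ):ℂ) = (a:ℂ)*(p:ℂ) := by push_cast; rfl
  have htri : (j+1)*((j+1)+1)/2 = j*(j+1)/2 + (j+1) := by
    have h1 : j*(j+1) = 2*(j*(j+1)/2) := (Nat.two_mul_div_two_of_even (Nat.even_mul_succ_self j)).symm
    have h2 : (j+1)*((j+1)+1) = j*(j+1) + 2*(j+1) := by ring
    omega
  have hx2 : 2*(j+1) = 2*j + 2 := by omega
  simp only [trm, hcast]
  rw [sx_pow hsp x (j+1), sx_pow hsp x j]
  simp only [qPochC_succ (p:ℂ) (p:ℂ) j, qPochC_succ' (a:ℂ) (p:ℂ) j, htri, pow_add, hx2]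
  rw [hcast] at hQap
  have hB : (qPochC (p:ℂ) (p:ℂ) j * (1 - (p:ℂ) * (p:ℂ) ^ j)) *
      ((1 - (a:ℂ)) * qPochC ((a:ℂ)*(p:ℂ)) (p:ℂ) j) ≠ 0 :=
    mul_ne_zero (mul_ne_zero hP hpk) (mul_ne_zero hone hQap)
  have hD : (1 - (a:ℂ)) * (qPochC (p:ℂ) (p:ℂ) j * qPochC ((a:ℂ)*(p:ℂ)) (p:ℂ) j) ≠ 0 :=
    mul_ne_zero hone (mul_ne_zero hP hQap)
  rw [div_sub_div_same, neg_mul, div_mul_div_comm, ← neg_div, div_eq_div_iff hB hD]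
  ring

end rel

/-- the series -/
def G (p a : ℝ) (x : ℂ) : ℂ := ∑' k, trm p a x k

section sums
variable {p s a : ℝ}

lemma ha_step (ha1 : ∀ j : ℕ, a * p^j ≠ 1) : ∀ j : ℕ, (a*p) * p^j ≠ 1 := fun j => by
  rw [mul_assoc, ← pow_succ']; exact ha1 (j+1)

lemma trm_ratio (hp0 : 0 < p) (hp1 : p < 1) (ha1 : ∀ j : ℕ, a * p^j ≠ 1) (x : ℂ) (k : ℕ) :
    trm p a x (k+1) = trm p a x k *
      ((-((p:ℂ)*(p:ℂ)^k) * x^2) / ((1 - (p:ℂ)*(p:ℂ)^k) * (1 - (a:ℂ)*(p:ℂ)^k))) := by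
  have hp := hpne hp0 hp1
  have hP := qPochC_ne_zero hp k
  have hQa := qPochC_ne_zero ha1 k
  have hpk : (1:ℂ) - (p:ℂ)*(p:ℂ)^k ≠ 0 := by
    have h0 : ((1 - p*p^k : ℝ):ℂ) ≠ 0 := by
      rw [Complex.ofReal_ne_zero]; intro h; exact hp k (by linarith)
    push_cast at h0; simpa using h0
  have hak : (1:ℂ) - (a:ℂ)*(p:ℂ)^k ≠ 0 := by
    have h0 : ((1 - a*p^k : ℝ):ℂ) ≠ 0 := by
      rw [Complex.ofReal_ne_zero]; intro h; exact ha1 k (by linarith)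
    push_cast at h0; simpa using h0
  have htri : (k+1)*((k+1)+1)/2 = k*(k+1)/2 + (k+1) := by
    have h1 : k*(k+1) = 2*(k*(k+1)/2) :=
      (Nat.two_mul_div_two_of_even (Nat.even_mul_succ_self k)).symm
    have h2 : (k+1)*((k+1)+1) = k*(k+1) + 2*(k+1) := by ring
    omega
  have hx2 : 2*(k+1) = 2*k + 2 := by omega
  simp only [trm, qPochC_succ (p:ℂ) (p:ℂ) k, qPochC_succ (a:ℂ) (p:ℂ) k, htri, pow_add, hx2]
  rw [div_mul_div_comm, div_eq_div_iff
    (mul_ne_zero (mul_ne_zero hP hpk) (mul_ne_zero hQa hak))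
    (mul_ne_zero (mul_ne_zero hP hQa) (mul_ne_zero hpk hak))]
  ring

lemma summable_trm (hp0 : 0 < p) (hp1 : p < 1) (ha0 : 0 < a)
    (ha1 : ∀ j : ℕ, a * p^j ≠ 1) (x : ℂ) : Summable (trm p a x) := by
  refine summable_of_ratio_norm_eventually_le (r := 1/2) (by norm_num) ?_
  have hten : Filter.Tendsto (fun k : ℕ => p^k) Filter.atTop (nhds 0) :=
    tendsto_pow_atTop_nhds_zero_of_lt_one hp0.le hp1
  have E1 : ∀ᶠ k : ℕ in Filter.atTop, p*p^k < 1/2 := by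
    have h := (hten.const_mul p).eventually_lt_const
      (show p * 0 < 1/2 by norm_num)
    simpa using h
  have E2 : ∀ᶠ k : ℕ in Filter.atTop, a*p^k < 1/2 := by
    have h := (hten.const_mul a).eventually_lt_const
      (show a * 0 < 1/2 by norm_num)
    simpa using h
  have E3 : ∀ᶠ k : ℕ in Filter.atTop, p*p^k*‖x‖^2 < 1/8 := by
    have h := ((hten.const_mul p).mul_const (‖x‖^2)).eventually_lt_const
      (show p * 0 * ‖x‖^2 < 1/8 by norm_num)
    simpa using h
  filter_upwards [E1, E2, E3] with k h1 h2 h3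
  rw [trm_ratio hp0 hp1 ha1 x k, norm_mul, mul_comm (1/2 : ℝ)]
  have hppk : (0:ℝ) < p*p^k := mul_pos hp0 (pow_pos hp0 k)
  have hapk : (0:ℝ) < a*p^k := mul_pos ha0 (pow_pos hp0 k)
  have hr : ‖(-((p:ℂ)*(p:ℂ)^k) * x^2) / ((1 - (p:ℂ)*(p:ℂ)^k) * (1 - (a:ℂ)*(p:ℂ)^k))‖ ≤ 1/2 := by
    have e1 : ((1:ℂ) - (p:ℂ)*(p:ℂ)^k) = ((1 - p*p^k : ℝ) : ℂ) := by push_cast; ring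
    have e2 : ((1:ℂ) - (a:ℂ)*(p:ℂ)^k) = ((1 - a*p^k : ℝ) : ℂ) := by push_cast; ring
    have e3 : (-((p:ℂ)*(p:ℂ)^k) * x^2) = ((-(p*p^k) : ℝ) : ℂ) * x^2 := by push_cast; ring
    rw [norm_div, e1, e2, e3, norm_mul, norm_mul, Complex.norm_real, Complex.norm_real,
      Complex.norm_real, norm_pow]
    rw [Real.norm_eq_abs, Real.norm_eq_abs, Real.norm_eq_abs, abs_neg, abs_of_pos hppk,
      abs_of_pos (by linarith : (0:ℝ) < 1 - p*p^k), abs_of_pos (by linarith : (0:ℝ) < 1 - a*p^k)]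
    calc p*p^k*‖x‖^2 / ((1-p*p^k)*(1-a*p^k)) ≤ (1/8) / ((1/2)*(1/2)) := by
          apply div_le_div₀ (by norm_num) h3.le (by norm_num) (by nlinarith)
      _ = 1/2 := by norm_num
  calc ‖trm p a x k‖ * ‖_ / _‖ ≤ ‖trm p a x k‖ * (1/2) :=
        mul_le_mul_of_nonneg_left hr (norm_nonneg _)
    _ = _ := by ring

lemma summable_trm_norm (hp0 : 0 < p) (hp1 : p < 1) (ha0 : 0 < a)
    (ha1 : ∀ j : ℕ, a * p^j ≠ 1) (x : ℂ) : Summable (fun k => ‖trm p a x k‖) :=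
  summable_norm_iff.mpr (summable_trm hp0 hp1 ha0 ha1 x)

variable (hp0 : 0 < p) (hp1 : p < 1) (hsp : s^2 = p) (ha0 : 0 < a)
  (ha1 : ∀ j : ℕ, a * p^j ≠ 1)

include hp0 hp1 hsp ha0 ha1

lemma relB (x : ℂ) :
    G p a x - G p (a*p) x = ((a:ℂ)/(1-(a:ℂ))) * (G p (a*p) x - G p (a*p) ((s:ℂ)*x)) := by
  have hap0 : 0 < a*p := mul_pos ha0 hp0
  have s1 := summable_trm hp0 hp1 ha0 ha1 x
  have s2 := summable_trm hp0 hp1 hap0 (ha_step ha1) x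
  have s3 := summable_trm hp0 hp1 hap0 (ha_step ha1) ((s:ℂ)*x)
  rw [G, G, G, ← Summable.tsum_sub s1 s2, ← Summable.tsum_sub s2 s3, ← tsum_mul_left]
  exact tsum_congr fun k => relB_term (hpne hp0 hp1) ha1 x k hsp

lemma relA (x : ℂ) :
    G p a x - G p a ((s:ℂ)*x) = -((p:ℂ)*x^2/(1-(a:ℂ))) * G p (a*p) ((s:ℂ)*x) := by
  have hap0 : 0 < a*p := mul_pos ha0 hp0
  have s1 := summable_trm hp0 hp1 ha0 ha1 x
  have s4 := summable_trm hp0 hp1 ha0 ha1 ((s:ℂ)*x)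
  have hd : Summable (fun k => trm p a x k - trm p a ((s:ℂ)*x) k) := s1.sub s4
  rw [G, G, G, ← Summable.tsum_sub s1 s4, Summable.tsum_eq_zero_add hd, ← tsum_mul_left]
  rw [trm_zero, trm_zero, sub_self, zero_add]
  exact tsum_congr fun j => relA_term hsp (hpne hp0 hp1) ha1 x j

lemma step {x : ℂ} (hx : x ≠ 0) (h1 : G p a x = 0) (h2 : G p (a*p) x = 0) :
    G p a ((s:ℂ)*x) = 0 ∧ G p (a*p) ((s:ℂ)*x) = 0 := by
  have hane : a ≠ 1 := by simpa using ha1 0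
  have hone : (1:ℂ) - (a:ℂ) ≠ 0 := by
    rw [sub_ne_zero]; intro h; exact hane (by exact_mod_cast h.symm)
  have hCne : ((a:ℂ)/(1-(a:ℂ))) ≠ 0 :=
    div_ne_zero (by exact_mod_cast ha0.ne') hone
  have hB := relB hp0 hp1 hsp ha0 ha1 (x := x)
  have h3 : G p (a*p) ((s:ℂ)*x) = 0 := by
    have h' : ((a:ℂ)/(1-(a:ℂ))) * G p (a*p) ((s:ℂ)*x) = 0 := by
      linear_combination hB - h1 + h2 + ((a:ℂ)/(1-(a:ℂ))) * h2
    exact (mul_eq_zero.1 h').resolve_left hCne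
  have hA := relA hp0 hp1 hsp ha0 ha1 (x := x)
  have h4 : G p a ((s:ℂ)*x) = 0 := by
    linear_combination -hA + h1 + ((p:ℂ)*x^2/(1-(a:ℂ))) * h3
  exact ⟨h4, h3⟩

set_option maxHeartbeats 1000000 in
lemma no_common_zero (hs0 : 0 < s) (hs1 : s < 1) {x : ℂ} (hx : x ≠ 0)
    (h1 : G p a x = 0) (h2 : G p (a*p) x = 0) : False := by
  have key : ∀ m : ℕ, G p a ((s:ℂ)^m * x) = 0 ∧ G p (a*p) ((s:ℂ)^m * x) = 0 := by
    intro m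
    induction m with
    | zero => simpa using ⟨h1, h2⟩
    | succ m ih =>
      have hy : (s:ℂ)^m * x ≠ 0 :=
        mul_ne_zero (pow_ne_zero _ (by exact_mod_cast hs0.ne')) hx
      have hstep := step hp0 hp1 hsp ha0 ha1 hy ih.1 ih.2
      have he : (s:ℂ)^(m+1) * x = (s:ℂ) * ((s:ℂ)^m * x) := by ring
      rw [he]
      exact hstep
  -- now derive the contradiction
  have hMsum : Summable (fun k => ‖trm p a x (k+1)‖) :=
    (summable_nat_add_iff 1).mpr (summable_trm_norm hp0 hp1 ha0 ha1 x)
  set M : ℝ := ∑' k, ‖trm p a x (k+1)‖ with hM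
  have hbound : ∀ m : ℕ, (1:ℝ) ≤ (s^2)^m * M := by
    intro m
    set z : ℂ := (s:ℂ)^m * x with hz
    have h0 := (key m).1
    have hsz := summable_trm hp0 hp1 ha0 ha1 z
    have hexp : G p a z = trm p a z 0 + ∑' k, trm p a z (k+1) := by
      rw [G]; exact Summable.tsum_eq_zero_add hsz
    rw [h0, trm_zero] at hexp
    have hT : ∑' k, trm p a z (k+1) = -1 := by linear_combination -hexp
    have hzn : Summable (fun k => ‖trm p a z (k+1)‖) :=
      (summable_nat_add_iff 1).mpr (summable_trm_norm hp0 hp1 ha0 ha1 z)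
    have h1n : (1:ℝ) = ‖∑' k, trm p a z (k+1)‖ := by rw [hT]; simp
    have hterm : ∀ k : ℕ, ‖trm p a z (k+1)‖ ≤ (s^2)^m * ‖trm p a x (k+1)‖ := by
      intro k
      have hfac : trm p a z (k+1) = trm p a x (k+1) * ((s:ℂ)^m)^(2*(k+1)) := by
        simp only [trm, hz]
        rw [mul_pow]
        ring
      rw [hfac, norm_mul, norm_pow, norm_pow, Complex.norm_real,
        Real.norm_eq_abs, abs_of_pos hs0, mul_comm]
      have : (s^m)^(2*(k+1)) ≤ (s^2)^m := by
        rw [← pow_mul, ← pow_mul]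
        apply pow_le_pow_of_le_one hs0.le hs1.le
        nlinarith
      exact mul_le_mul_of_nonneg_right this (norm_nonneg _)
    calc (1:ℝ) = ‖∑' k, trm p a z (k+1)‖ := h1n
      _ ≤ ∑' k, ‖trm p a z (k+1)‖ := norm_tsum_le_tsum_norm hzn
      _ ≤ ∑' k, (s^2)^m * ‖trm p a x (k+1)‖ :=
          Summable.tsum_le_tsum hterm hzn (hMsum.mul_left _)
      _ = (s^2)^m * M := tsum_mul_left
  have hs2 : (0:ℝ) ≤ s^2 := sq_nonneg s
  have hs21 : s^2 < 1 := by nlinarith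
  have hten : Filter.Tendsto (fun m : ℕ => (s^2)^m * M) Filter.atTop (nhds 0) := by
    have h := (tendsto_pow_atTop_nhds_zero_of_lt_one hs2 hs21).mul_const M
    simpa using h
  obtain ⟨m, hm⟩ := (hten.eventually_lt_const (show (0:ℝ) < 1 by norm_num)).exists
  exact absurd (hbound m) (not_le.mpr hm)

end sums

section inf
open Filter

variable {p : ℝ}

lemma qPochInfC_ne_zero (hp0 : 0 < p) (hp1 : p < 1) (a : ℝ)
    (ha1 : ∀ j : ℕ, a * p^j ≠ 1) : qPochInfC (a:ℂ) (p:ℂ) ≠ 0 := by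
  have hfn : ∀ j : ℕ, (1:ℂ) - (a:ℂ) * (p:ℂ)^j ≠ 0 := fun j => by
    have h0 : ((1 - a*p^j : ℝ):ℂ) ≠ 0 := by
      rw [Complex.ofReal_ne_zero]; intro h; exact ha1 j (by linarith)
    push_cast at h0; simpa using h0
  have hlog : Summable (fun j : ℕ => Complex.log (1 - (a:ℂ)*(p:ℂ)^j)) := by
    have hgeom : Summable (fun j : ℕ => (3/2) * (|a| * p^j)) :=
      ((summable_geometric_of_lt_one hp0.le hp1).mul_left _).mul_left _
    refine Summable.of_norm_bounded_eventually hgeom ?_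
    rw [Nat.cofinite_eq_atTop]
    have hten : Tendsto (fun j : ℕ => |a| * p^j) atTop (nhds 0) := by
      have h := (tendsto_pow_atTop_nhds_zero_of_lt_one hp0.le hp1).const_mul |a|
      simpa using h
    filter_upwards [hten.eventually_le_const (show (0:ℝ) < 1/2 by norm_num)] with j hj
    have hnz : ‖-((a:ℂ)*(p:ℂ)^j)‖ = |a| * p^j := by
      rw [norm_neg, norm_mul, norm_pow, Complex.norm_real, Complex.norm_real,
        Real.norm_eq_abs, Real.norm_eq_abs, abs_of_pos hp0]
    have hb := Complex.norm_log_one_add_half_le_self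
      (z := -((a:ℂ)*(p:ℂ)^j)) (by rw [hnz]; exact hj)
    rw [show (1:ℂ) + -((a:ℂ)*(p:ℂ)^j) = 1 - (a:ℂ)*(p:ℂ)^j by ring, hnz] at hb
    exact hb
  have h0 := Complex.cexp_tsum_eq_tprod (f := fun j : ℕ => 1 - (a:ℂ)*(p:ℂ)^j) hfn hlog
  rw [qPochInfC, ← h0]
  exact Complex.exp_ne_zero _

lemma rpow_ha1 (hp0 : 0 < p) (hp1 : p < 1) {t : ℝ} (ht : ∀ j : ℕ, t + (j:ℝ) ≠ 0) :
    ∀ j : ℕ, p^t * p^j ≠ 1 := by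
  intro j h
  have he : p^t * p^j = p^(t + j) := by
    rw [← Real.rpow_natCast p j, ← Real.rpow_add hp0]
  rw [he] at h
  have hlog : (t + j) * Real.log p = 0 := by
    rw [← Real.log_rpow hp0, h, Real.log_one]
  have : Real.log p < 0 := Real.log_neg hp0 hp1
  exact ht j (by
    rcases mul_eq_zero.1 hlog with h' | h'
    · exact h'
    · exact absurd h' this.ne)

lemma pne1 (hp0 : 0 < p) (hp1 : p < 1) : ∀ j : ℕ, p * p^j ≠ 1 := fun j h => by
  nlinarith [pow_le_one₀ hp0.le hp1.le (n := j), pow_nonneg hp0.le j]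

lemma Jser_eq_G (ν : ℝ) (x : ℂ) :
    Jser ν p x = x ^ (ν:ℂ) *
      (qPochInfC ((p ^ (ν + 1) : ℝ) : ℂ) (p:ℂ) / qPochInfC (p:ℂ) (p:ℂ)) *
      G p (p^(ν+1)) x := rfl

lemma Jser_to_G (hp0 : 0 < p) (hp1 : p < 1) (ν : ℝ)
    (hν : ∀ j : ℕ, ν + 1 + (j:ℝ) ≠ 0) {x : ℂ} (hx : x ≠ 0)
    (h : Jser ν p x = 0) : G p (p^(ν+1)) x = 0 := by
  rw [Jser_eq_G] at h
  have hcp : x ^ (ν:ℂ) ≠ 0 := by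
    intro h0
    exact hx ((Complex.cpow_eq_zero_iff x (ν:ℂ)).1 h0).1
  have hnum : qPochInfC ((p ^ (ν + 1) : ℝ) : ℂ) (p:ℂ) ≠ 0 :=
    qPochInfC_ne_zero hp0 hp1 _ (rpow_ha1 hp0 hp1 hν)
  have hden : qPochInfC (p:ℂ) (p:ℂ) ≠ 0 := by
    have := qPochInfC_ne_zero hp0 hp1 p (by
      intro j
      have := pne1 hp0 hp1 j
      simpa using this)
    exact this
  have hc : qPochInfC ((p ^ (ν + 1) : ℝ) : ℂ) (p:ℂ) / qPochInfC (p:ℂ) (p:ℂ) ≠ 0 :=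
    div_ne_zero hnum hden
  rcases mul_eq_zero.1 h with h' | h'
  · rcases mul_eq_zero.1 h' with h'' | h''
    · exact absurd h'' hcp
    · exact absurd h'' hc
  · exact h'

end inf
end HE

/-- Proposition 3.8: `J_ν(·;q²)` and `J_{ν+1}(·;q²)` have no common zeros except
possibly `0`. -/
theorem prop_3_8 (q : ℝ) (hq0 : 0 < q) (hq1 : q < 1) (ν : ℝ) :
    ¬ ∃ x : ℂ, x ≠ 0 ∧ JHE ν (q ^ 2) x = 0 ∧ JHE (ν + 1) (q ^ 2) x = 0 := by
  rintro ⟨x, hx, h1, h2⟩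
  have hp0 : 0 < q^2 := by positivity
  have hp1 : q^2 < 1 := by nlinarith
  by_cases hc : ∃ n : ℕ, ν = -(n:ℝ)
  · -- ν is a nonpositive integer
    rw [JHE, dif_pos hc] at h1
    have hn₀ : ν = -((hc.choose : ℕ):ℝ) := hc.choose_spec
    have hcne : (((q^2)^(((hc.choose:ℕ):ℝ)/2) : ℝ) : ℂ) ≠ 0 := by
      exact_mod_cast (Real.rpow_pos_of_pos hp0 _).ne'
    have hJ1 : Jser ((hc.choose:ℕ):ℝ) (q^2)
        (x * (((q^2)^(((hc.choose:ℕ):ℝ)/2) : ℝ) : ℂ)) = 0 := by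
      rcases mul_eq_zero.1 h1 with h' | h'
      · rcases mul_eq_zero.1 h' with h'' | h''
        · exact absurd h'' (pow_ne_zero _ (by norm_num))
        · exact absurd h'' hcne
      · exact h'
    cases hNe : hc.choose with
    | zero =>
      rw [hNe] at hJ1
      have hν0 : ν = 0 := by rw [hn₀, hNe]; simp
      have hc2 : ¬ ∃ m : ℕ, ν + 1 = -(m:ℝ) := by
        rintro ⟨m, hm⟩
        rw [hν0] at hm
        have : (0:ℝ) ≤ (m:ℝ) := Nat.cast_nonneg m
        linarith
      rw [JHE, dif_neg hc2] at h2
      rw [hν0] at h2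
      simp only [Nat.cast_zero, zero_div, Real.rpow_zero] at hJ1
      rw [Complex.ofReal_one, mul_one] at hJ1
      have hν : ∀ j : ℕ, (0:ℝ) + 1 + (j:ℝ) ≠ 0 := by
        intro j; have : (0:ℝ) ≤ (j:ℝ) := Nat.cast_nonneg j; intro h; linarith
      have hν2 : ∀ j : ℕ, ((0:ℝ)+1) + 1 + (j:ℝ) ≠ 0 := by
        intro j; have : (0:ℝ) ≤ (j:ℝ) := Nat.cast_nonneg j; intro h; linarith
      have g1 := HE.Jser_to_G hp0 hp1 0 hν hx hJ1
      have g2 := HE.Jser_to_G hp0 hp1 (0+1) hν2 hx h2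
      have hae : ((q^2:ℝ))^((0:ℝ)+1+1) = ((q^2:ℝ))^((0:ℝ)+1) * q^2 := by
        rw [Real.rpow_add_one hp0.ne']
      rw [hae] at g2
      exact HE.no_common_zero (s := q) hp0 hp1 rfl (Real.rpow_pos_of_pos hp0 _)
        (HE.rpow_ha1 hp0 hp1 hν) hq0 hq1 hx g1 g2
    | succ m =>
      rw [hNe] at hJ1
      have hνm : ν = -((m:ℝ)+1) := by rw [hn₀, hNe]; push_cast; ring
      have hc2 : ∃ k : ℕ, ν + 1 = -(k:ℝ) := ⟨m, by rw [hνm]; ring⟩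
      rw [JHE, dif_pos hc2] at h2
      have hm₀ : hc2.choose = m := by
        have hs := hc2.choose_spec
        have h' : ((hc2.choose:ℕ):ℝ) = (m:ℝ) := by linarith
        exact_mod_cast h'
      rw [hm₀] at h2
      have hcne2 : (((q^2)^(((m:ℕ):ℝ)/2) : ℝ) : ℂ) ≠ 0 := by
        exact_mod_cast (Real.rpow_pos_of_pos hp0 _).ne'
      have hJ2 : Jser ((m:ℕ):ℝ) (q^2) (x * (((q^2)^(((m:ℕ):ℝ)/2) : ℝ) : ℂ)) = 0 := by
        rcases mul_eq_zero.1 h2 with h' | h'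
        · rcases mul_eq_zero.1 h' with h'' | h''
          · exact absurd h'' (pow_ne_zero _ (by norm_num))
          · exact absurd h'' hcne2
        · exact h'
      set y : ℂ := x * (((q^2)^(((m:ℕ):ℝ)/2) : ℝ) : ℂ) with hy
      have hyne : y ≠ 0 := mul_ne_zero hx hcne2
      -- the point of hJ1 is q * y
      have hq12 : ((q^2:ℝ))^((1:ℝ)/2) = q := by
        rw [← Real.rpow_natCast q 2, ← Real.rpow_mul hq0.le]
        norm_num
      have hpt : (((q^2)^((((m+1:ℕ)):ℝ)/2) : ℝ) : ℂ)
          = (q:ℂ) * (((q^2)^(((m:ℕ):ℝ)/2) : ℝ) : ℂ) := by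
        have hr : ((q^2:ℝ))^((((m+1:ℕ)):ℝ)/2) = q * ((q^2:ℝ))^(((m:ℕ):ℝ)/2) := by
          have : ((((m+1:ℕ)):ℝ))/2 = ((1:ℝ)/2) + ((m:ℕ):ℝ)/2 := by push_cast; ring
          rw [this, Real.rpow_add hp0, hq12]
        rw [hr]; push_cast; ring
      rw [hpt] at hJ1
      have hpt2 : x * ((q:ℂ) * (((q^2)^(((m:ℕ):ℝ)/2) : ℝ) : ℂ)) = (q:ℂ) * y := by
        rw [hy]; ring
      rw [hpt2] at hJ1
      have hν : ∀ j : ℕ, ((m:ℕ):ℝ) + 1 + (j:ℝ) ≠ 0 := by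
        intro j
        have h1' : (0:ℝ) ≤ (j:ℝ) := Nat.cast_nonneg j
        have h2' : (0:ℝ) ≤ ((m:ℕ):ℝ) := Nat.cast_nonneg m
        intro h; linarith
      have hν1 : ∀ j : ℕ, (((m+1:ℕ)):ℝ) + 1 + (j:ℝ) ≠ 0 := by
        intro j
        have h1' : (0:ℝ) ≤ (j:ℝ) := Nat.cast_nonneg j
        have h2' : (0:ℝ) ≤ (((m+1:ℕ)):ℝ) := Nat.cast_nonneg _
        intro h; linarith
      have hqy : (q:ℂ) * y ≠ 0 := mul_ne_zero (by exact_mod_cast hq0.ne') hyne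
      have g1 := HE.Jser_to_G hp0 hp1 (((m+1:ℕ)):ℝ) hν1 hqy hJ1
      have g2 := HE.Jser_to_G hp0 hp1 ((m:ℕ):ℝ) hν hyne hJ2
      -- rewrite the parameter of g1
      have hae : ((q^2:ℝ))^((((m+1:ℕ)):ℝ)+1) = ((q^2:ℝ))^(((m:ℕ):ℝ)+1) * q^2 := by
        have : ((((m+1:ℕ)):ℝ)+1) = (((m:ℕ):ℝ)+1) + 1 := by push_cast; ring
        rw [this, Real.rpow_add_one hp0.ne']
      rw [hae] at g1
      have ha0 : 0 < ((q^2:ℝ))^(((m:ℕ):ℝ)+1) := Real.rpow_pos_of_pos hp0 _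
      have ha1 := HE.rpow_ha1 hp0 hp1 (t := ((m:ℕ):ℝ)+1) hν
      have hGa := HE.relA (s := q) hp0 hp1 rfl ha0 ha1 y
      have g3 : HE.G (q^2) (((q^2:ℝ))^(((m:ℕ):ℝ)+1)) ((q:ℂ) * y) = 0 := by
        linear_combination -hGa + g2
          + (((q^2:ℝ):ℂ)*y^2/(1-(((q^2:ℝ))^(((m:ℕ):ℝ)+1):ℝ):ℂ)) * g1
      exact HE.no_common_zero (s := q) hp0 hp1 rfl ha0 ha1 hq0 hq1 hqy g3 g1
  · -- generic order
    have hc2 : ¬ ∃ n : ℕ, ν + 1 = -(n:ℝ) := by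
      rintro ⟨n, hn⟩
      exact hc ⟨n+1, by push_cast; linarith⟩
    rw [JHE, dif_neg hc] at h1
    rw [JHE, dif_neg hc2] at h2
    have hν : ∀ j : ℕ, ν + 1 + (j:ℝ) ≠ 0 := by
      intro j h
      exact hc ⟨j+1, by push_cast; linarith⟩
    have hν2 : ∀ j : ℕ, (ν+1) + 1 + (j:ℝ) ≠ 0 := by
      intro j h
      exact hc ⟨j+2, by push_cast; linarith⟩
    have g1 := HE.Jser_to_G hp0 hp1 ν hν hx h1
    have g2 := HE.Jser_to_G hp0 hp1 (ν+1) hν2 hx h2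
    have hae : ((q^2:ℝ))^(ν+1+1) = ((q^2:ℝ))^(ν+1) * q^2 := by
      rw [Real.rpow_add_one hp0.ne']
    rw [hae] at g2
    exact HE.no_common_zero (s := q) hp0 hp1 rfl (Real.rpow_pos_of_pos hp0 _)
      (HE.rpow_ha1 hp0 hp1 hν) hq0 hq1 hx g1 g2


end
end
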